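/- arXiv:1207.2506 — 8 statements merged into one kernel-verified Lean document; each statement's English description precedes it below -/
import Mathlib

section
/- Every finite connected unweighted graph G = (V,E) has a vertex v and an integer r with r ≤ tb(G) such that the disk D_r(v,G) is a balanced separator of G, i.e., every connected component of G[V ∖ D_r(v,G)] has at most |V|/2 vertices. -/
open SimpleGraph

/-- A (Robertson–Seymour) tree-decomposition of a graph `G`:
a tree `T` on an index type `I` together with bags `X i ⊆ V` such that
every vertex is in some bag, every edge has both ends in some bag, and
for every path of `T` from `i` to `k` passing through `j`, `X i ∩ X k ⊆ X j`. -/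
def IsTreeDecomp {V I : Type} (G : SimpleGraph V) (T : SimpleGraph I) (X : I → Set V) : Prop :=
  T.IsTree ∧
  (∀ v : V, ∃ i, v ∈ X i) ∧
  (∀ u v : V, G.Adj u v → ∃ i, u ∈ X i ∧ v ∈ X i) ∧
  (∀ i j k : I, ∀ p : T.Walk i k, p.IsPath → j ∈ p.support → X i ∩ X k ⊆ X j)

/-- The disk `D_r(v,G)` of radius `r` centered at `v`. -/
def disk {V : Type} (G : SimpleGraph V) (v : V) (r : ℕ) : Set V :=
  {u | G.dist u v ≤ r}

/-- The tree-breadth of `G`: the minimum `r` such that `G` has a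
tree-decomposition each bag of which is contained in a disk of radius `r`. -/
noncomputable def treeBreadth {V : Type} (G : SimpleGraph V) : ℕ :=
  sInf { r : ℕ | ∃ (I : Type) (T : SimpleGraph I) (X : I → Set V),
    IsTreeDecomp G T X ∧ ∀ i, ∃ v : V, X i ⊆ disk G v r }

/-- The `k`-tree-breadth of `G`: the minimum `r` such that `G` has a
tree-decomposition each bag of which can be covered by at most `k` disks of radius `r`. -/
noncomputable def kTreeBreadth {V : Type} (k : ℕ) (G : SimpleGraph V) : ℕ :=
  sInf { r : ℕ | ∃ (I : Type) (T : SimpleGraph I) (X : I → Set V),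
    IsTreeDecomp G T X ∧ ∀ i, ∃ s : Finset V, s.card ≤ k ∧ X i ⊆ ⋃ v ∈ s, disk G v r }

/-- The tree-length of `G`: the minimum `l` such that `G` has a
tree-decomposition each bag of which has diameter at most `l` in `G`. -/
noncomputable def treeLength {V : Type} (G : SimpleGraph V) : ℕ :=
  sInf { l : ℕ | ∃ (I : Type) (T : SimpleGraph I) (X : I → Set V),
    IsTreeDecomp G T X ∧ ∀ i, ∀ u ∈ X i, ∀ v ∈ X i, G.dist u v ≤ l }

/-- The tree-width of `G`: the minimum `w` such that `G` has a
tree-decomposition each bag of which has at most `w + 1` vertices. -/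
noncomputable def treeWidth {V : Type} (G : SimpleGraph V) : ℕ :=
  sInf { w : ℕ | ∃ (I : Type) (T : SimpleGraph I) (X : I → Set V),
    IsTreeDecomp G T X ∧ ∀ i, (X i).ncard ≤ w + 1 }

/-- `S` is a balanced separator of `G`: every connected component of
`G[V ∖ S]` has at most `|V|/2` vertices. -/
def IsBalancedSeparator {V : Type} (G : SimpleGraph V) [Fintype V] (S : Set V) : Prop :=
  ∀ C : (G.induce Sᶜ).ConnectedComponent, 2 * Nat.card C.supp ≤ Fintype.card V

/-- The graph obtained from `G` by contracting the edge `xy`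
(`y` is merged into `x`). -/
def contract {V : Type} (G : SimpleGraph V) (x y : V) : SimpleGraph {v : V // v ≠ y} where
  Adj a b := a ≠ b ∧ (G.Adj a.1 b.1 ∨ (a.1 = x ∧ G.Adj y b.1) ∨ (b.1 = x ∧ G.Adj y a.1))
  symm := by
    constructor
    rintro a b ⟨hab, h⟩
    refine ⟨hab.symm, ?_⟩
    rcases h with h | ⟨h1, h2⟩ | ⟨h1, h2⟩
    · exact Or.inl h.symm
    · exact Or.inr (Or.inr ⟨h1, h2⟩)
    · exact Or.inr (Or.inl ⟨h1, h2⟩)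
  loopless := by constructor; rintro a ⟨h, -⟩; exact h rfl

/-- A graph is chordal if every cycle of length at least four has a chord:
an edge of `G` between two vertices of the cycle that is not an edge of the cycle. -/
def IsChordal {V : Type} (G : SimpleGraph V) : Prop :=
  ∀ (v : V) (c : G.Walk v v), c.IsCycle → 4 ≤ c.length →
    ∃ x y, G.Adj x y ∧ x ∈ c.support ∧ y ∈ c.support ∧ ¬ c.toSubgraph.Adj x y

section TreePath
variable {I : Type} {T : SimpleGraph I} (hT : T.IsTree)

noncomputable def thePath (u v : I) : T.Walk u v :=
  (hT.existsUnique_path u v).choose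

lemma thePath_isPath (u v : I) : (thePath hT u v).IsPath :=
  (hT.existsUnique_path u v).choose_spec.1

lemma thePath_unique {u v : I} (p : T.Walk u v) (hp : p.IsPath) : p = thePath hT u v :=
  (hT.existsUnique_path u v).choose_spec.2 p hp

noncomputable def texit (i k : I) : I := (thePath hT i k).getVert 1

lemma texit_spec {i k : I} (hk : k ≠ i) :
    T.Adj i (texit hT i k) ∧
    (thePath hT i k).length = (thePath hT (texit hT i k) k).length + 1 ∧
    i ∉ (thePath hT (texit hT i k) k).support := by
  have hp := thePath_isPath hT i k
  cases hpq : thePath hT i k with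
  | nil => exact absurd rfl hk
  | cons h q =>
      rename_i j
      rw [hpq, Walk.cons_isPath_iff] at hp
      have hq := thePath_unique hT q hp.1
      have he : texit hT i k = j := by
        rw [texit, hpq, Walk.getVert_cons_succ, Walk.getVert_zero]
      subst he
      rw [← hq]
      exact ⟨h, by simp, hp.2⟩

lemma texit_eq {i j k : I} (h : T.Adj i j) (hmem : i ∉ (thePath hT j k).support) :
    texit hT i k = j := by
  have hpath : (Walk.cons h (thePath hT j k)).IsPath :=
    (Walk.cons_isPath_iff h (thePath hT j k)).mpr ⟨thePath_isPath hT j k, hmem⟩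
  rw [texit, ← thePath_unique hT _ hpath, Walk.getVert_cons_succ, Walk.getVert_zero]

/-- adjacent vertices (both ≠ i) have the same exit from i -/
lemma texit_adj_eq {i u v : I} (huv : T.Adj u v) (hu : u ≠ i) (hv : v ≠ i) :
    texit hT i u = texit hT i v := by
  classical
  set j := texit hT i u with hj
  obtain ⟨hadj, -, hmem⟩ := texit_spec hT hu
  by_cases hcase : v ∈ (thePath hT j u).support
  · have htake : ((thePath hT j u).takeUntil v hcase) = thePath hT j v :=
      thePath_unique hT _ ((thePath_isPath hT j u).takeUntil hcase)
    have : i ∉ (thePath hT j v).support := by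
      rw [← htake]
      exact fun hmem' => hmem (Walk.support_takeUntil_subset _ hcase hmem')
    exact (texit_eq hT hadj this).symm
  · have hconcat : ((thePath hT j u).concat huv).IsPath := by
      rw [Walk.isPath_def, Walk.support_concat]
      have := List.Nodup.concat hcase ((thePath_isPath hT j u).support_nodup)
      rwa [List.concat_eq_append] at this
    have heq : (thePath hT j u).concat huv = thePath hT j v := thePath_unique hT _ hconcat
    have : i ∉ (thePath hT j v).support := by
      rw [← heq, Walk.support_concat]
      intro hmem'
      rcases List.mem_append.mp hmem' with h' | h'
      · exact hmem h'
      · exact hv (List.mem_singleton.mp h').symm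
    exact (texit_eq hT hadj this).symm

/-- exit is constant along a T-walk avoiding i -/
lemma texit_walk_const {i : I} : ∀ {k k' : I} (q : T.Walk k k'), i ∉ q.support →
    texit hT i k = texit hT i k' := by
  intro k k' q
  induction q with
  | nil => intro _; rfl
  | cons h p ih =>
      rename_i a b c
      intro hq
      rw [Walk.support_cons, List.mem_cons] at hq
      push_neg at hq
      have h1 : a ≠ i := fun he => hq.1 he.symm
      have h2 : b ≠ i := fun he => hq.2 (he ▸ p.start_mem_support)
      exact (texit_adj_eq hT h h1 h2).trans (ih hq.2)
end TreePath

section Main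
variable {V I : Type} [Fintype V] {G : SimpleGraph V} {T : SimpleGraph I} {X : I → Set V}

lemma bag_exit_const (hd : IsTreeDecomp G T X) (hT : T.IsTree) {i : I} {w : V}
    (hw : w ∉ X i) {k k' : I} (hk : w ∈ X k) (hk' : w ∈ X k') :
    texit hT i k = texit hT i k' := by
  have hq : i ∉ (thePath hT k k').support := by
    intro hmem
    exact hw (hd.2.2.2 k i k' (thePath hT k k') (thePath_isPath hT k k') hmem ⟨hk, hk'⟩)
  exact texit_walk_const hT (thePath hT k k') hq

lemma walk_exit_const (hd : IsTreeDecomp G T X) (hT : T.IsTree) {i : I} :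
    ∀ {a b : ↥(X i)ᶜ} (_ : (G.induce (X i)ᶜ).Walk a b) {k k' : I},
      a.1 ∈ X k → b.1 ∈ X k' → texit hT i k = texit hT i k' := by
  intro a b p
  induction p with
  | nil =>
      rename_i a'
      exact fun hk hk' => bag_exit_const hd hT a'.2 hk hk'
  | cons h p ih =>
      rename_i x y z
      intro k k' hk hk'
      have hadj : G.Adj x.1 y.1 := h
      obtain ⟨k0, hu, hv⟩ := hd.2.2.1 x.1 y.1 hadj
      exact (bag_exit_const hd hT x.prop hk hu).trans (ih hv hk')
set_option maxHeartbeats 1000000 in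
lemma exists_balanced_bag [Fintype I] [Nonempty V]
    (hd : IsTreeDecomp G T X) : ∃ i, IsBalancedSeparator G (X i) := by
  classical
  by_contra hcon
  push_neg at hcon
  have hcon' : ∀ i, ∃ Cc : (G.induce (X i)ᶜ).ConnectedComponent,
      Fintype.card V < 2 * Nat.card Cc.supp := by
    intro i
    have h := hcon i
    unfold IsBalancedSeparator at h
    push_neg at h
    exact h
  choose C hC using hcon'
  have hT := hd.1
  set A : I → Set V := fun i => Subtype.val '' (C i).supp with hA
  have hAcard : ∀ i, Fintype.card V < 2 * (A i).ncard := by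
    intro i
    have : (A i).ncard = Nat.card ((C i).supp) := by
      rw [hA]
      simp only []
      rw [Set.ncard_image_of_injective _ Subtype.val_injective, Nat.card_coe_set_eq]
    rw [this]; exact hC i
  have hAsub : ∀ i, ∀ w ∈ A i, w ∉ X i := by
    rintro i w ⟨a, _, rfl⟩
    exact a.2
  have hAne : ∀ i, (A i).Nonempty := by
    intro i
    obtain ⟨v, hv⟩ := (C i).exists_rep
    exact ⟨v.1, ⟨v, by rw [ConnectedComponent.mem_supp_iff]; exact hv, rfl⟩⟩
  choose bag hbag using hd.2.1
  set w0 : I → V := fun i => (hAne i).choose with hw0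
  have hw0mem : ∀ i, w0 i ∈ A i := fun i => (hAne i).choose_spec
  set j : I → I := fun i => texit hT i (bag (w0 i)) with hj
  have hbagne : ∀ i, ∀ w ∈ A i, ∀ k, w ∈ X k → k ≠ i := by
    intro i w hw k hk he
    exact hAsub i w hw (he ▸ hk)
  have key : ∀ i, ∀ w ∈ A i, ∀ k, w ∈ X k → texit hT i k = j i := by
    rintro i w hw k hk
    obtain ⟨a, ha, rfl⟩ := hw
    obtain ⟨a0, ha0, he0⟩ := hw0mem i
    rw [ConnectedComponent.mem_supp_iff] at ha ha0
    have hreach : (G.induce (X i)ᶜ).Reachable a a0 :=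
      ConnectedComponent.exact (ha.trans ha0.symm)
    obtain ⟨p⟩ := hreach
    have := walk_exit_const hd hT p hk (he0 ▸ hbag (w0 i) : a0.1 ∈ X (bag (w0 i)))
    rw [hj]; exact this
  have hadjj : ∀ i, T.Adj i (j i) := by
    intro i
    exact (texit_spec hT (hbagne i _ (hw0mem i) _ (hbag (w0 i)))).1
  haveI : Fintype T.edgeSet := (Set.toFinite T.edgeSet).fintype
  have hIne : Nonempty I := ⟨bag (Classical.arbitrary V)⟩
  have hcard : Fintype.card T.edgeSet < Fintype.card I := by
    have h1 := hT.card_edgeFinset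
    have h2 : T.edgeFinset.card = Fintype.card T.edgeSet := Set.toFinset_card _
    omega
  obtain ⟨i, i', hne, hfeq⟩ :=
    Fintype.exists_ne_map_eq_of_card_lt
      (fun i => (⟨s(i, j i), (T.mem_edgeSet).mpr (hadjj i)⟩ : T.edgeSet)) hcard
  have hsym : (i = i' ∧ j i = j i') ∨ (i = j i' ∧ j i = i') :=
    Sym2.eq_iff.mp (congrArg Subtype.val hfeq)
  obtain ⟨hii', hji⟩ : i = j i' ∧ j i = i' := by
    rcases hsym with ⟨h1, _⟩ | h2
    · exact absurd h1 hne
    · exact h2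
  have hint : (A i ∩ A i').Nonempty := by
    by_contra h
    rw [Set.not_nonempty_iff_eq_empty] at h
    have hdisj : Disjoint (A i) (A i') := Set.disjoint_iff_inter_eq_empty.mpr h
    have hu := Set.ncard_union_eq hdisj (Set.toFinite _) (Set.toFinite _)
    have hle : (A i ∪ A i').ncard ≤ Fintype.card V := by
      have := Set.ncard_le_ncard (Set.subset_univ (A i ∪ A i')) (Set.toFinite _)
      rwa [Set.ncard_univ, Nat.card_eq_fintype_card] at this
    have := hAcard i
    have := hAcard i'
    omega
  obtain ⟨w, hwi, hwi'⟩ := hint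
  have hk := hbag w
  have h1 : texit hT i (bag w) = i' := by rw [key i w hwi (bag w) hk, hji]
  have h2 : texit hT i' (bag w) = i := by rw [key i' w hwi' (bag w) hk, ← hii']
  have hki : bag w ≠ i := hbagne i w hwi _ hk
  have hki' : bag w ≠ i' := hbagne i' w hwi' _ hk
  have l1 := (texit_spec hT hki).2.1
  have l2 := (texit_spec hT hki').2.1
  rw [h1] at l1
  rw [h2] at l2
  omega
end Main

lemma balanced_mono {V : Type} [Fintype V] {G : SimpleGraph V} {S S' : Set V}
    (hss : S ⊆ S') (h : IsBalancedSeparator G S) : IsBalancedSeparator G S' := by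
  classical
  intro C'
  have hcompl : (S' : Set V)ᶜ ⊆ Sᶜ := Set.compl_subset_compl.mpr hss
  let φ := (SimpleGraph.induceHomOfLE G hcompl).toHom
  obtain ⟨x, hx⟩ := C'.exists_rep
  set Cb := (G.induce Sᶜ).connectedComponentMk (φ x) with hCb
  have hsub : Subtype.val '' C'.supp ⊆ Subtype.val '' Cb.supp := by
    rintro w ⟨b, hb, rfl⟩
    rw [ConnectedComponent.mem_supp_iff] at hb
    have hreach : (G.induce S'ᶜ).Reachable x b := ConnectedComponent.exact (hx.trans hb.symm)
    have hr2 := hreach.map φ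
    exact ⟨φ b, by rw [ConnectedComponent.mem_supp_iff, hCb]
                   exact (ConnectedComponent.sound hr2.symm), rfl⟩
  have h1 : Nat.card C'.supp ≤ Nat.card Cb.supp := by
    rw [Nat.card_coe_set_eq, Nat.card_coe_set_eq,
      ← Set.ncard_image_of_injective C'.supp Subtype.val_injective,
      ← Set.ncard_image_of_injective Cb.supp Subtype.val_injective]
    exact Set.ncard_le_ncard hsub (Set.toFinite _)
  have h2 := h Cb
  omega

section Restrict
variable {V I : Type} {G : SimpleGraph V} {T : SimpleGraph I} {X : I → Set V}

lemma reachable_of_walk_support {J : Set I} :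
    ∀ {a b : I} (p : T.Walk a b) (_ : ∀ x ∈ p.support, x ∈ J) (ha : a ∈ J) (hb : b ∈ J),
      (T.induce J).Reachable ⟨a, ha⟩ ⟨b, hb⟩ := by
  intro a b p
  induction p with
  | nil => intro _ ha hb; rfl
  | cons h q ih =>
      rename_i x y z
      intro hsup ha hb
      have hy : y ∈ J := hsup y (by simp [Walk.support_cons])
      have hadj : (T.induce J).Adj ⟨x, ha⟩ ⟨y, hy⟩ := h
      exact hadj.reachable.trans (ih (fun t ht => hsup t (by simp [Walk.support_cons, ht])) hy hb)

lemma restrict_decomp [Fintype V] [Nonempty V] (hd : IsTreeDecomp G T X) :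
    ∃ (J : Set I), J.Finite ∧ IsTreeDecomp G (T.induce J) (fun j => X j.1) := by
  classical
  have hT := hd.1
  choose c hc using hd.2.1
  have hce0 : ∀ u v : V, ∃ i, G.Adj u v → u ∈ X i ∧ v ∈ X i := by
    intro u v
    by_cases h : G.Adj u v
    · exact (hd.2.2.1 u v h).imp fun i hi => fun _ => hi
    · exact ⟨c u, fun hadj => absurd hadj h⟩
  choose ce hce using hce0
  set i0 := c (Classical.arbitrary V) with hi0def
  set J : Set I := (⋃ v : V, {i | i ∈ (thePath hT i0 (c v)).support}) ∪
      (⋃ p : V × V, {i | i ∈ (thePath hT i0 (ce p.1 p.2)).support}) with hJ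
  have hJfin : J.Finite := Set.Finite.union
    (Set.finite_iUnion fun v => (thePath hT i0 (c v)).support.finite_toSet)
    (Set.finite_iUnion fun p => (thePath hT i0 (ce p.1 p.2)).support.finite_toSet)
  have hJc : ∀ v : V, c v ∈ J := fun v =>
    Set.mem_union_left _ (Set.mem_iUnion.mpr ⟨v, Walk.end_mem_support _⟩)
  have hJce : ∀ u v : V, ce u v ∈ J := fun u v =>
    Set.mem_union_right _ (Set.mem_iUnion.mpr ⟨(u, v), Walk.end_mem_support _⟩)
  have hJi0 : i0 ∈ J := hJc _
  -- every j in J is connected to i0 within J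
  have hreach : ∀ j (hj : j ∈ J), (T.induce J).Reachable ⟨i0, hJi0⟩ ⟨j, hj⟩ := by
    intro j hj
    have : ∃ t : I, (∀ x ∈ (thePath hT i0 t).support, x ∈ J) ∧ j ∈ (thePath hT i0 t).support := by
      rcases hj with hj | hj
      · obtain ⟨v, hv⟩ := Set.mem_iUnion.mp hj
        exact ⟨c v, fun x hx => Set.mem_union_left _ (Set.mem_iUnion.mpr ⟨v, hx⟩), hv⟩
      · obtain ⟨p, hp⟩ := Set.mem_iUnion.mp hj
        exact ⟨ce p.1 p.2, fun x hx => Set.mem_union_right _ (Set.mem_iUnion.mpr ⟨p, hx⟩), hp⟩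
    obtain ⟨t, hsubJ, hmem⟩ := this
    exact reachable_of_walk_support ((thePath hT i0 t).takeUntil j hmem)
      (fun x hx => hsubJ x (Walk.support_takeUntil_subset _ hmem hx)) hJi0 hj
  have hconn : (T.induce J).Connected := by
    rw [connected_iff]
    refine ⟨?_, ⟨⟨i0, hJi0⟩⟩⟩
    rintro ⟨a, ha⟩ ⟨b, hb⟩
    exact (hreach a ha).symm.trans (hreach b hb)
  have hacyc : (T.induce J).IsAcyclic := by
    intro v p hp
    have := hp.map (f := (SimpleGraph.Embedding.induce J).toHom)
      (Function.Embedding.injective _)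
    exact hT.IsAcyclic _ this
  refine ⟨J, hJfin, ⟨⟨hconn, hacyc⟩, ?_, ?_, ?_⟩⟩
  · exact fun v => ⟨⟨c v, hJc v⟩, hc v⟩
  · exact fun u v huv => ⟨⟨ce u v, hJce u v⟩, hce u v huv⟩
  · rintro ⟨i, hi⟩ ⟨j, hj⟩ ⟨k, hk⟩ p hp hmem
    have hp' : (p.map (SimpleGraph.Embedding.induce J).toHom).IsPath :=
      Walk.map_isPath_of_injective (Function.Embedding.injective _) hp
    have hmem' : j ∈ (p.map (SimpleGraph.Embedding.induce J).toHom).support := by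
      rw [Walk.support_map]
      exact List.mem_map.mpr ⟨⟨j, hj⟩, hmem, rfl⟩
    exact hd.2.2.2 i j k _ hp' hmem'
end Restrict


/-- Every connected graph `G` has a disk `D_r(v,G)` with `r ≤ tb(G)`
which is a balanced separator of `G`. -/
theorem stmt3 {V : Type} [Fintype V] (G : SimpleGraph V) (hG : G.Connected) :
    ∃ (v : V) (r : ℕ), r ≤ treeBreadth G ∧ IsBalancedSeparator G (disk G v r) := by
  classical
  haveI : Nonempty V := hG.nonempty
  set Sset := { r : ℕ | ∃ (I : Type) (T : SimpleGraph I) (X : I → Set V),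
    IsTreeDecomp G T X ∧ ∀ i, ∃ v : V, X i ⊆ disk G v r } with hSset
  have hSne : Sset.Nonempty := by
    obtain ⟨v0⟩ := ‹Nonempty V›
    refine ⟨Finset.univ.sup (fun u => G.dist u v0), Unit, ⊥, fun _ => Set.univ, ⟨⟨?_, ?_⟩, ?_, ?_, ?_⟩, ?_⟩
    · rw [connected_iff]
      exact ⟨fun a b => by rw [Subsingleton.elim a b], ⟨()⟩⟩
    · intro v p hp
      cases p with
      | nil => simp at hp
      | cons h q => exact h.elim
    · exact fun v => ⟨(), Set.mem_univ v⟩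
    · exact fun u v _ => ⟨(), Set.mem_univ u, Set.mem_univ v⟩
    · intro i j k p hp hmem
      exact fun w _ => Set.mem_univ w
    · intro i
      exact ⟨v0, fun u _ => Finset.le_sup (f := fun u => G.dist u v0) (Finset.mem_univ u)⟩
  have hmem : treeBreadth G ∈ Sset := Nat.sInf_mem hSne
  obtain ⟨I, T, X, hd, hdisk⟩ := hmem
  obtain ⟨J, hJfin, hd'⟩ := restrict_decomp hd
  haveI : Fintype J := hJfin.fintype
  obtain ⟨i, hbal⟩ := exists_balanced_bag hd'
  obtain ⟨v, hv⟩ := hdisk i.1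
  exact ⟨v, treeBreadth G, le_refl _, balanced_mono hv hbal⟩
end

section
/- For every finite connected unweighted graph G, every edge e of G, and every integer ρ ≥ 1, if tb(G) ≤ ρ then tb(G/e) ≤ ρ, where G/e is the graph obtained from G by contracting the edge e. -/
open SimpleGraph

section Aux
variable {V : Type}

open Classical in
noncomputable def cmap (x y : V) (hne : x ≠ y) (v : V) : {v : V // v ≠ y} :=
  if h : v = y then ⟨x, hne⟩ else ⟨v, h⟩

lemma cmap_step {G : SimpleGraph V} {x y : V} (hxy : G.Adj x y)
    {a b : V} (hab : G.Adj a b) :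
    cmap x y hxy.ne a = cmap x y hxy.ne b ∨
      (contract G x y).Adj (cmap x y hxy.ne a) (cmap x y hxy.ne b) := by
  classical
  unfold cmap
  by_cases ha : a = y <;> by_cases hb : b = y
  · rw [ha, hb] at hab; exact absurd hab (G.loopless.irrefl y)
  · subst ha
    rw [dif_pos rfl, dif_neg hb]
    by_cases hbx : b = x
    · subst hbx; exact Or.inl rfl
    · exact Or.inr ⟨fun hc => hbx (congrArg Subtype.val hc).symm, Or.inr (Or.inl ⟨rfl, hab⟩)⟩
  · subst hb
    rw [dif_neg ha, dif_pos rfl]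
    by_cases hax : a = x
    · subst hax; exact Or.inl rfl
    · exact Or.inr ⟨fun hc => hax (congrArg Subtype.val hc), Or.inr (Or.inr ⟨rfl, hab.symm⟩)⟩
  · rw [dif_neg ha, dif_neg hb]
    exact Or.inr ⟨fun hc => hab.ne (congrArg Subtype.val hc), Or.inl hab⟩

lemma cmap_walk {G : SimpleGraph V} {x y : V} (hxy : G.Adj x y)
    {u v : V} (w : G.Walk u v) :
    ∃ w' : (contract G x y).Walk (cmap x y hxy.ne u) (cmap x y hxy.ne v),
      w'.length ≤ w.length := by
  induction w with
  | nil => exact ⟨.nil, le_rfl⟩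
  | cons hadj p ih =>
    obtain ⟨w', hw'⟩ := ih
    rcases cmap_step hxy hadj with he | hAdj
    · rw [he]; exact ⟨w', le_trans hw' (by simp)⟩
    · exact ⟨.cons hAdj w', by simpa using Nat.succ_le_succ hw'⟩

lemma cmap_dist {G : SimpleGraph V} (hG : G.Connected) {x y : V} (hxy : G.Adj x y)
    (u v : V) :
    (contract G x y).dist (cmap x y hxy.ne u) (cmap x y hxy.ne v) ≤ G.dist u v := by
  obtain ⟨w, hw⟩ := hG.exists_walk_length_eq_dist u v
  obtain ⟨w', hw'⟩ := cmap_walk hxy w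
  exact le_trans (dist_le w') (hw ▸ hw')

lemma tree_support_split {I : Type} {T : SimpleGraph I} (hT : T.IsTree)
    {i k : I} (p : T.Walk i k) (hp : p.IsPath) (l : I) {j : I} (hj : j ∈ p.support) :
    ∃ (q1 : T.Walk i l) (q2 : T.Walk l k), q1.IsPath ∧ q2.IsPath ∧
      (j ∈ q1.support ∨ j ∈ q2.support) := by
  classical
  obtain ⟨w1⟩ := hT.isConnected.preconnected i l
  obtain ⟨w2⟩ := hT.isConnected.preconnected l k
  refine ⟨w1.bypass, w2.bypass, w1.bypass_isPath, w2.bypass_isPath, ?_⟩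
  have hup : p = (w1.bypass.append w2.bypass).bypass :=
    congrArg Subtype.val (hT.IsAcyclic.path_unique ⟨p, hp⟩
      ⟨(w1.bypass.append w2.bypass).bypass, Walk.bypass_isPath _⟩)
  rw [hup] at hj
  have h2 := Walk.support_bypass_subset _ hj
  rwa [Walk.mem_support_append_iff] at h2

end Aux

/-- Tree-breadth does not increase under edge contraction. -/
theorem stmt4 {V : Type} [Fintype V] (G : SimpleGraph V) (hG : G.Connected)
    (x y : V) (hxy : G.Adj x y) (ρ : ℕ) (hρ : 1 ≤ ρ) (h : treeBreadth G ≤ ρ) :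
    treeBreadth (contract G x y) ≤ ρ := by
  classical
  have hx_ne_y : x ≠ y := hxy.ne
  -- the defining set for treeBreadth G is nonempty
  have hSne : { r : ℕ | ∃ (I : Type) (T : SimpleGraph I) (X : I → Set V),
      IsTreeDecomp G T X ∧ ∀ i, ∃ v : V, X i ⊆ disk G v r }.Nonempty := by
    refine ⟨Fintype.card V, Unit, ⊥, fun _ => Set.univ, ⟨⟨?_, isAcyclic_bot⟩, ?_, ?_, ?_⟩, ?_⟩
    · constructor
      intro u v
      rw [Subsingleton.elim u v]
    · exact fun v => ⟨(), Set.mem_univ v⟩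
    · exact fun u v _ => ⟨(), Set.mem_univ u, Set.mem_univ v⟩
    · intro i j k p hp hj a ha
      exact Set.mem_univ a
    · intro i
      obtain ⟨v⟩ := hG.nonempty
      refine ⟨v, fun u _ => ?_⟩
      obtain ⟨w⟩ := hG.preconnected u v
      exact le_trans (dist_le w.bypass) (le_of_lt w.bypass_isPath.length_lt)
  have hmem := Nat.sInf_mem hSne
  obtain ⟨I, T, X, hTD, hball⟩ := hmem
  obtain ⟨hT, hcov, hedge, hcoh⟩ := hTD
  -- a bag containing both x and y
  obtain ⟨l, hxl, hyl⟩ := hedge x y hxy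
  -- build the decomposition of the contracted graph
  apply Nat.sInf_le
  refine ⟨I, T, fun i => {a : {v : V // v ≠ y} | a.1 ∈ X i ∨ (a.1 = x ∧ y ∈ X i)},
    ⟨hT, ?_, ?_, ?_⟩, ?_⟩
  · intro a
    obtain ⟨i, hi⟩ := hcov a.1
    exact ⟨i, Or.inl hi⟩
  · rintro a b ⟨hab, hAdj | ⟨ha1, hb1⟩ | ⟨hb1, ha1⟩⟩
    · obtain ⟨i, hi1, hi2⟩ := hedge a.1 b.1 hAdj
      exact ⟨i, Or.inl hi1, Or.inl hi2⟩
    · obtain ⟨i, hi1, hi2⟩ := hedge y b.1 hb1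
      exact ⟨i, Or.inr ⟨ha1, hi1⟩, Or.inl hi2⟩
    · obtain ⟨i, hi1, hi2⟩ := hedge y a.1 ha1
      exact ⟨i, Or.inl hi2, Or.inr ⟨hb1, hi1⟩⟩
  · intro i j k p hp hj a ⟨hai, hak⟩
    obtain ⟨q1, q2, hq1, hq2, hjq⟩ := tree_support_split hT p hp l hj
    rcases hai with hai | ⟨hax, hyi⟩ <;> rcases hak with hak | ⟨hax', hyk⟩
    · exact Or.inl (hcoh i j k p hp hj ⟨hai, hak⟩)
    · -- a.1 ∈ X i, a.1 = x, y ∈ X k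
      rcases hjq with hjq | hjq
      · exact Or.inl (hcoh i j l q1 hq1 hjq ⟨hai, hax' ▸ hxl⟩)
      · exact Or.inr ⟨hax', hcoh l j k q2 hq2 hjq ⟨hyl, hyk⟩⟩
    · -- a.1 = x, y ∈ X i, a.1 ∈ X k
      rcases hjq with hjq | hjq
      · exact Or.inr ⟨hax, hcoh i j l q1 hq1 hjq ⟨hyi, hyl⟩⟩
      · exact Or.inl (hcoh l j k q2 hq2 hjq ⟨hax ▸ hxl, hak⟩)
    · exact Or.inr ⟨hax, hcoh i j k p hp hj ⟨hyi, hyk⟩⟩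
  · intro i
    obtain ⟨v, hv⟩ := hball i
    refine ⟨cmap x y hx_ne_y v, ?_⟩
    rintro a (ha | ⟨hax, hyi⟩)
    · have hd : G.dist a.1 v ≤ ρ := le_trans (hv ha) h
      have hca : cmap x y hx_ne_y a.1 = a := by
        unfold cmap; rw [dif_neg a.2]
      have := cmap_dist hG hxy a.1 v
      rw [hca] at this
      exact le_trans this hd
    · have hd : G.dist y v ≤ ρ := le_trans (hv hyi) h
      have hca : cmap x y hx_ne_y y = a := by
        unfold cmap; rw [dif_pos rfl]; exact Subtype.ext hax.symm
      have := cmap_dist hG hxy y v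
      rw [hca] at this
      exact le_trans this hd
end

section
/- If a finite connected unweighted graph G admits a multiplicative tree t-spanner, then tb(G) ≤ ⌈t/2⌉ and tl(G) ≤ t. -/
open SimpleGraph

namespace TreeSpannerAux

variable {V : Type} {T : SimpleGraph V}

lemma path_eq (hT : T.IsTree) {a b : V} {p q : T.Walk a b} (hp : p.IsPath) (hq : q.IsPath) :
    p = q :=
  (hT.existsUnique_path a b).unique hp hq

lemma exists_path_dist (hc : T.Connected) (a b : V) :
    ∃ p : T.Walk a b, p.IsPath ∧ p.length = T.dist a b := by
  classical
  obtain ⟨q, hq⟩ := hc.exists_walk_length_eq_dist a b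
  exact ⟨q.bypass, q.bypass_isPath,
    le_antisymm (hq ▸ q.length_bypass_le) (SimpleGraph.dist_le _)⟩

lemma path_length_eq_dist (hT : T.IsTree) {a b : V} {p : T.Walk a b} (hp : p.IsPath) :
    p.length = T.dist a b := by
  obtain ⟨q, hq, hql⟩ := exists_path_dist hT.isConnected a b
  rw [path_eq hT hp hq, hql]

lemma dist_split (hT : T.IsTree) {a b x : V} {p : T.Walk a b} (hp : p.IsPath)
    (hx : x ∈ p.support) : T.dist a x + T.dist x b = T.dist a b := by
  classical
  have h1 := path_length_eq_dist hT (hp.takeUntil hx)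
  have h2 := path_length_eq_dist hT (hp.dropUntil hx)
  have h3 := path_length_eq_dist hT hp
  rw [← h1, ← h2, ← h3, ← Walk.length_append, p.take_spec hx]

lemma dist_adj (hc : T.Connected) {a b : V} (h : T.Adj a b) : T.dist a b = 1 := by
  have h1 : T.dist a b ≤ 1 := by
    simpa using SimpleGraph.dist_le (Walk.cons h Walk.nil)
  have h2 : T.dist a b ≠ 0 := fun h0 => h.ne (hc.dist_eq_zero_iff.mp h0)
  omega

lemma adj_dist_ne (hT : T.IsTree) (u : V) {x y : V} (h : T.Adj x y) :
    T.dist u x ≠ T.dist u y := by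
  intro he
  obtain ⟨q, hq, hql⟩ := exists_path_dist hT.isConnected u y
  by_cases hx : x ∈ q.support
  · have hs := dist_split hT hq hx
    have hxy := dist_adj hT.isConnected h
    omega
  · have hp2 : (Walk.cons h q.reverse).IsPath := by
      rw [Walk.cons_isPath_iff]
      refine ⟨hq.reverse, ?_⟩
      rw [Walk.support_reverse, List.mem_reverse]
      exact hx
    have hl := path_length_eq_dist hT hp2
    rw [Walk.length_cons, Walk.length_reverse, hql] at hl
    have hcm : T.dist x u = T.dist u x := SimpleGraph.dist_comm
    omega

lemma adj_dist_cases (hT : T.IsTree) (u : V) {x y : V} (h : T.Adj x y) :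
    T.dist u y = T.dist u x + 1 ∨ T.dist u x = T.dist u y + 1 := by
  have h1 : T.dist u y ≤ T.dist u x + T.dist x y := hT.isConnected.dist_triangle
  have h2 : T.dist u x ≤ T.dist u y + T.dist y x := hT.isConnected.dist_triangle
  have h3 := dist_adj hT.isConnected h
  have h4 := dist_adj hT.isConnected h.symm
  have h5 := adj_dist_ne hT u h
  omega

lemma exists_median (hT : T.IsTree) {u i k : V} (A : T.Walk u i) :
    A.IsPath → ∀ (B : T.Walk u k), B.IsPath →
    ∃ m, T.dist u i = T.dist u m + T.dist m i ∧
         T.dist u k = T.dist u m + T.dist m k ∧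
         T.dist i k = T.dist i m + T.dist m k := by
  classical
  induction A with
  | @nil w =>
    intro _ B hB
    exact ⟨w, by simp [SimpleGraph.dist_self], by simp [SimpleGraph.dist_self],
      by simp [SimpleGraph.dist_self]⟩
  | @cons u a i h A' ih =>
    intro hA B hB
    have hA' : A'.IsPath := ((Walk.cons_isPath_iff _ _).mp hA).1
    have huA' : u ∉ A'.support := ((Walk.cons_isPath_iff _ _).mp hA).2
    cases B with
    | nil =>
      refine ⟨k, by simp [SimpleGraph.dist_self], by simp [SimpleGraph.dist_self],
        by simp [SimpleGraph.dist_self]⟩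
    | @cons _ b _ h' B' =>
      have hB' : B'.IsPath := ((Walk.cons_isPath_iff _ _).mp hB).1
      have huB' : u ∉ B'.support := ((Walk.cons_isPath_iff _ _).mp hB).2
      by_cases hab : a = b
      · subst hab
        obtain ⟨m, h1, h2, h3⟩ := ih hA' B' hB'
        have dui : T.dist u i = T.dist a i + 1 := by
          have e1 := path_length_eq_dist hT hA
          have e2 := path_length_eq_dist hT hA'
          rw [Walk.length_cons] at e1
          omega
        have duk : T.dist u k = T.dist a k + 1 := by
          have e1 := path_length_eq_dist hT hB
          have e2 := path_length_eq_dist hT hB'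
          rw [Walk.length_cons] at e1
          omega
        have hum : T.dist u m = T.dist a m + 1 := by
          have t1 : T.dist u m ≤ T.dist u a + T.dist a m := hT.isConnected.dist_triangle
          have t2 : T.dist u i ≤ T.dist u m + T.dist m i := hT.isConnected.dist_triangle
          have t3 := dist_adj hT.isConnected h
          omega
        exact ⟨m, by omega, by omega, h3⟩
      · -- m = u
        have hdisj : ∀ x, x ∈ A'.support → x ∈ B'.support → False := by
          intro x hx1 hx2
          have hxu1 : u ≠ x := fun he => huA' (he ▸ hx1)
          have P1 : (Walk.cons h (A'.takeUntil x hx1)).IsPath := by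
            rw [Walk.cons_isPath_iff]
            exact ⟨hA'.takeUntil hx1, fun hc => huA' (A'.support_takeUntil_subset hx1 hc)⟩
          have P2 : (Walk.cons h' (B'.takeUntil x hx2)).IsPath := by
            rw [Walk.cons_isPath_iff]
            exact ⟨hB'.takeUntil hx2, fun hc => huB' (B'.support_takeUntil_subset hx2 hc)⟩
          have := path_eq hT P1 P2
          have hg : (Walk.cons h (A'.takeUntil x hx1)).getVert 1
              = (Walk.cons h' (B'.takeUntil x hx2)).getVert 1 := by rw [this]
          rw [Walk.getVert_cons_succ, Walk.getVert_cons_succ, Walk.getVert_zero,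
            Walk.getVert_zero] at hg
          exact hab hg
        set A : T.Walk u i := Walk.cons h A' with hAdef
        set B : T.Walk u k := Walk.cons h' B' with hBdef
        have hW : (A.reverse.append B).IsPath := by
          rw [Walk.isPath_def, Walk.support_append, Walk.support_reverse]
          refine List.Nodup.append (by simpa using hA.support_nodup) ?_ ?_
          · have : B.support.tail = B'.support := by simp [hBdef]
            rw [this]
            exact hB'.support_nodup
          · intro x hx1 hx2
            rw [List.mem_reverse] at hx1
            have hx2' : x ∈ B'.support := by
              have : B.support.tail = B'.support := by simp [hBdef]
              rwa [this] at hx2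
            rcases (by simpa [hAdef] using hx1 : x = u ∨ x ∈ A'.support) with rfl | hx1'
            · exact huB' hx2'
            · exact hdisj x hx1' hx2'
        have e1 := path_length_eq_dist hT hW
        have e2 := path_length_eq_dist hT hA
        have e3 := path_length_eq_dist hT hB
        rw [Walk.length_append, Walk.length_reverse] at e1
        have hcomm : T.dist i u = T.dist u i := SimpleGraph.dist_comm
        exact ⟨u, by simp [SimpleGraph.dist_self], by simp [SimpleGraph.dist_self], by omega⟩

lemma on_path_dist (hT : T.IsTree) {i k j : V} (p : T.Walk i k) (hp : p.IsPath)
    (hj : j ∈ p.support) (u : V) :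
    T.dist u i = T.dist u j + T.dist j i ∨ T.dist u k = T.dist u j + T.dist j k := by
  classical
  obtain ⟨A, hA, _⟩ := exists_path_dist hT.isConnected u i
  obtain ⟨B, hB, _⟩ := exists_path_dist hT.isConnected u k
  obtain ⟨m, h1, h2, h3⟩ := exists_median hT A hA B hB
  obtain ⟨P1, hP1, _⟩ := exists_path_dist hT.isConnected i m
  obtain ⟨P2, hP2, _⟩ := exists_path_dist hT.isConnected m k
  have hQ : (P1.append P2).IsPath := by
    rw [Walk.isPath_def, Walk.support_append]
    refine List.Nodup.append hP1.support_nodup ?_ ?_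
    · have hnd := hP2.support_nodup
      rw [Walk.support_eq_cons P2] at hnd
      exact hnd.of_cons
    · intro x hx1 hx2
      have hx2' : x ∈ P2.support := by
        rw [Walk.support_eq_cons P2]
        exact List.mem_cons_of_mem _ hx2
      have s1 := dist_split hT hP1 hx1
      have s2 := dist_split hT hP2 hx2'
      have t1 : T.dist i k ≤ T.dist i x + T.dist x k := hT.isConnected.dist_triangle
      have c1 : T.dist x m = T.dist m x := SimpleGraph.dist_comm
      have hxm : T.dist x m = 0 := by omega
      have hxe : x = m := hT.isConnected.dist_eq_zero_iff.mp hxm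
      subst hxe
      have hnd := hP2.support_nodup
      rw [Walk.support_eq_cons P2] at hnd
      exact (List.nodup_cons.mp hnd).1 hx2
  have hpq := path_eq hT hp hQ
  rw [hpq, Walk.mem_support_append_iff] at hj
  rcases hj with hj | hj
  · left
    have s1 := dist_split hT hP1 hj
    have t1 : T.dist u j ≤ T.dist u m + T.dist m j := hT.isConnected.dist_triangle
    have t2 : T.dist u i ≤ T.dist u j + T.dist j i := hT.isConnected.dist_triangle
    have c1 : T.dist m i = T.dist i m := SimpleGraph.dist_comm
    have c2 : T.dist m j = T.dist j m := SimpleGraph.dist_comm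
    have c3 : T.dist j i = T.dist i j := SimpleGraph.dist_comm
    omega
  · right
    have s2 := dist_split hT hP2 hj
    have t1 : T.dist u j ≤ T.dist u m + T.dist m j := hT.isConnected.dist_triangle
    have t2 : T.dist u k ≤ T.dist u j + T.dist j k := hT.isConnected.dist_triangle
    omega

lemma pos_on_path (hT : T.IsTree) {u v : V} (p : T.Walk u v) :
    p.IsPath → ∀ s, s < p.length →
    ∃ x y, T.Adj x y ∧ T.dist u x = s ∧ T.dist x v = p.length - s ∧
      T.dist u y = s + 1 ∧ T.dist y v = p.length - s - 1 := by
  induction p with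
  | nil => intro _ s hs; simp at hs
  | @cons u b v h p' ih =>
    intro hp s hs
    have hp' : p'.IsPath := ((Walk.cons_isPath_iff _ _).mp hp).1
    have hl' := path_length_eq_dist hT hp'
    have hl := path_length_eq_dist hT hp
    rw [Walk.length_cons] at hl hs ⊢
    have hub := dist_adj hT.isConnected h
    match s with
    | 0 =>
      refine ⟨u, b, h, by simp [SimpleGraph.dist_self], by omega, by omega, by omega⟩
    | s + 1 =>
      obtain ⟨x, y, hxy, d1, d2, d3, d4⟩ := ih hp' s (by omega)
      have t1 : T.dist u x ≤ T.dist u b + T.dist b x := hT.isConnected.dist_triangle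
      have t2 : T.dist u v ≤ T.dist u x + T.dist x v := hT.isConnected.dist_triangle
      have t3 : T.dist u y ≤ T.dist u b + T.dist b y := hT.isConnected.dist_triangle
      have t4 : T.dist u v ≤ T.dist u y + T.dist y v := hT.isConnected.dist_triangle
      exact ⟨x, y, hxy, by omega, by omega, by omega, by omega⟩

lemma toward_root_unique (hT : T.IsTree) {x r y z : V} (hy : T.Adj x y) (hz : T.Adj x z)
    (hdy : T.dist y r + 1 = T.dist x r) (hdz : T.dist z r + 1 = T.dist x r) : y = z := by
  classical
  obtain ⟨Py, hPy, hly⟩ := exists_path_dist hT.isConnected y r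
  obtain ⟨Pz, hPz, hlz⟩ := exists_path_dist hT.isConnected z r
  have hxy : x ∉ Py.support := by
    intro hc
    have := dist_split hT hPy hc
    have c1 : T.dist y x = 1 := dist_adj hT.isConnected hy.symm
    omega
  have hxz : x ∉ Pz.support := by
    intro hc
    have := dist_split hT hPz hc
    have c1 : T.dist z x = 1 := dist_adj hT.isConnected hz.symm
    omega
  have hWy : (Walk.cons hy Py).IsPath := (Walk.cons_isPath_iff _ _).mpr ⟨hPy, hxy⟩
  have hWz : (Walk.cons hz Pz).IsPath := (Walk.cons_isPath_iff _ _).mpr ⟨hPz, hxz⟩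
  have he := path_eq hT hWy hWz
  have hg : (Walk.cons hy Py).getVert 1 = (Walk.cons hz Pz).getVert 1 := by rw [he]
  rwa [Walk.getVert_cons_succ, Walk.getVert_cons_succ, Walk.getVert_zero,
    Walk.getVert_zero] at hg

lemma exists_parent (hT : T.IsTree) {x r : V} (hxr : x ≠ r) :
    ∃ y, T.Adj x y ∧ T.dist y r + 1 = T.dist x r := by
  obtain ⟨P, hP, hl⟩ := exists_path_dist hT.isConnected x r
  cases P with
  | nil => exact absurd rfl hxr
  | @cons _ y _ h P' =>
    have hP' : P'.IsPath := ((Walk.cons_isPath_iff _ _).mp hP).1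
    have hl' := path_length_eq_dist hT hP'
    rw [Walk.length_cons] at hl
    exact ⟨y, h, by omega⟩

end TreeSpannerAux

open TreeSpannerAux in
/-- If a connected graph `G` admits a multiplicative tree `t`-spanner,
then `tb(G) ≤ ⌈t/2⌉` and `tl(G) ≤ t`. -/
theorem stmt7 {V : Type} [Fintype V] (G : SimpleGraph V) (hG : G.Connected)
    (t : ℕ) (ht : 1 ≤ t)
    (h : ∃ T : SimpleGraph V, T ≤ G ∧ T.IsTree ∧ ∀ u v : V, T.dist u v ≤ t * G.dist u v) :
    treeBreadth G ≤ (t + 1) / 2 ∧ treeLength G ≤ t := by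
  classical
  obtain ⟨T, hTG, hT, hspan⟩ := h
  have hTc := hT.isConnected
  have hGT : ∀ u v : V, G.dist u v ≤ T.dist u v := fun u v =>
    SimpleGraph.Reachable.dist_anti hTG (hTc u v)
  obtain ⟨r⟩ : Nonempty V := hG.nonempty
  set pa : V → V := fun x =>
    if hx : x = r then x else Classical.choose (exists_parent hT hx) with hpa
  have pa_spec : ∀ x, ∀ hx : x ≠ r, T.Adj x (pa x) ∧ T.dist (pa x) r + 1 = T.dist x r := by
    intro x hx
    simp only [hpa, dif_neg hx]
    exact Classical.choose_spec (exists_parent hT hx)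
  have pa_root : pa r = r := by simp [hpa]
  have pa_dist : ∀ x, T.dist x (pa x) ≤ 1 := by
    intro x
    by_cases hx : x = r
    · subst hx; rw [pa_root]; simp [SimpleGraph.dist_self]
    · exact le_of_eq (dist_adj hTc (pa_spec x hx).1)
  have pa_adj_or : ∀ x y, T.Adj x y → pa x = y ∨ pa y = x := by
    intro x y hxy
    have cx : T.dist r x = T.dist x r := SimpleGraph.dist_comm
    have cy : T.dist r y = T.dist y r := SimpleGraph.dist_comm
    rcases adj_dist_cases hT r hxy with hc | hc
    · -- dist r y = dist r x + 1 : pa y = x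
      right
      have hyr : y ≠ r := by
        intro hyr; subst hyr
        rw [SimpleGraph.dist_self] at hc; omega
      obtain ⟨ha, hd⟩ := pa_spec y hyr
      exact (toward_root_unique hT (r := r) hxy.symm ha (by omega) hd).symm
    · left
      have hxr : x ≠ r := by
        intro hxr; subst hxr
        rw [SimpleGraph.dist_self] at hc; omega
      obtain ⟨ha, hd⟩ := pa_spec x hxr
      exact toward_root_unique hT (r := r) ha hxy hd (by omega)
  set X : V → Set V :=
    fun i => {u | T.dist u i ≤ t / 2 ∨ T.dist u (pa i) ≤ (t - 1) / 2} with hX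
  have hdecomp : IsTreeDecomp G T X := by
    refine ⟨hT, fun v => ⟨v, Or.inl (by simp [SimpleGraph.dist_self])⟩, ?_, ?_⟩
    · -- edges
      intro u v huv
      have hd1 : G.dist u v = 1 := by
        have h1 : G.dist u v ≤ 1 := by
          simpa using SimpleGraph.dist_le (SimpleGraph.Walk.cons huv SimpleGraph.Walk.nil)
        have h2 : G.dist u v ≠ 0 := fun h0 => huv.ne (hG.dist_eq_zero_iff.mp h0)
        omega
      have hlt : T.dist u v ≤ t := by
        have := hspan u v; rw [hd1] at this; omega
      have hl0 : T.dist u v ≠ 0 := fun h0 => huv.ne (hTc.dist_eq_zero_iff.mp h0)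
      obtain ⟨p, hp, hlen⟩ := exists_path_dist hTc u v
      obtain ⟨x, y, hxy, d1, d2, d3, d4⟩ :=
        pos_on_path hT p hp (T.dist u v / 2) (by omega)
      rw [hlen] at d2 d4
      have cvx : T.dist v x = T.dist x v := SimpleGraph.dist_comm
      have cvy : T.dist v y = T.dist y v := SimpleGraph.dist_comm
      by_cases hc : T.dist u v - T.dist u v / 2 ≤ t / 2
      · exact ⟨x, Or.inl (by omega), Or.inl (by omega)⟩
      · rcases pa_adj_or x y hxy with hpx | hpy
        · refine ⟨x, Or.inl (by omega), Or.inr ?_⟩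
          rw [hpx]; omega
        · refine ⟨y, Or.inr ?_, Or.inl (by omega)⟩
          rw [hpy]; omega
    · -- separation
      intro i j k p hp hj u hu
      obtain ⟨hui, huk⟩ := hu
      simp only [hX, Set.mem_setOf_eq] at hui huk ⊢
      have tri : T.dist u i ≤ T.dist u (pa i) + T.dist (pa i) i := hTc.dist_triangle
      have trk : T.dist u k ≤ T.dist u (pa k) + T.dist (pa k) k := hTc.dist_triangle
      have ci : T.dist (pa i) i = T.dist i (pa i) := SimpleGraph.dist_comm
      have ck : T.dist (pa k) k = T.dist k (pa k) := SimpleGraph.dist_comm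
      have pdi := pa_dist i
      have pdk := pa_dist k
      have bi : T.dist u i ≤ (t + 1) / 2 := by rcases hui with h1 | h1 <;> omega
      have bk : T.dist u k ≤ (t + 1) / 2 := by rcases huk with h1 | h1 <;> omega
      by_cases hji : j = i
      · subst hji; exact hui
      by_cases hjk : j = k
      · subst hjk; exact huk
      have hdji : T.dist j i ≠ 0 := fun h0 => hji (hTc.dist_eq_zero_iff.mp h0)
      have hdjk : T.dist j k ≠ 0 := fun h0 => hjk (hTc.dist_eq_zero_iff.mp h0)
      rcases on_path_dist hT p hp hj u with he | he
      · exact Or.inl (by omega)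
      · exact Or.inl (by omega)
  constructor
  · apply Nat.sInf_le
    refine ⟨V, T, X, hdecomp, fun i => ⟨i, ?_⟩⟩
    intro u hu
    simp only [hX, Set.mem_setOf_eq] at hu
    show G.dist u i ≤ (t + 1) / 2
    have hg := hGT u i
    have tri : T.dist u i ≤ T.dist u (pa i) + T.dist (pa i) i := hTc.dist_triangle
    have ci : T.dist (pa i) i = T.dist i (pa i) := SimpleGraph.dist_comm
    have pdi := pa_dist i
    rcases hu with h1 | h1 <;> omega
  · apply Nat.sInf_le
    refine ⟨V, T, X, hdecomp, ?_⟩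
    intro i u hu v hv
    simp only [hX, Set.mem_setOf_eq] at hu hv
    have hg := hGT u v
    have t1 : T.dist u v ≤ T.dist u i + T.dist i v := hTc.dist_triangle
    have t2 : T.dist u v ≤ T.dist u (pa i) + T.dist (pa i) v := hTc.dist_triangle
    have tA : T.dist u (pa i) ≤ T.dist u i + T.dist i (pa i) := hTc.dist_triangle
    have c1 : T.dist i v = T.dist v i := SimpleGraph.dist_comm
    have c2 : T.dist (pa i) v = T.dist v (pa i) := SimpleGraph.dist_comm
    have c3 : T.dist v (pa i) ≤ T.dist v i + T.dist i (pa i) := hTc.dist_triangle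
    have pdi := pa_dist i
    rcases hu with h1 | h1 <;> rcases hv with h2 | h2 <;> omega
end

section
/- Every finite connected unweighted graph G with n ≥ 4 vertices that admits a multiplicative tree t-spanner also admits an additive (2⌈t/2⌉·log₂ n)-spanner with at most n·log₂ n edges. -/
open SimpleGraph

open SimpleGraph Finset
open scoped Classical

namespace Stmt8

variable {V : Type}

/-- The region graph: edges of `T` plus edges of `G` inside `S`. -/
def gS (G T : SimpleGraph V) (S : Finset V) : SimpleGraph V where
  Adj u v := T.Adj u v ∨ (G.Adj u v ∧ u ∈ S ∧ v ∈ S)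
  symm := by
    constructor
    rintro u v (h | ⟨h, hu, hv⟩)
    · exact Or.inl h.symm
    · exact Or.inr ⟨h.symm, hv, hu⟩
  loopless := by
    constructor
    rintro u (h | ⟨h, -⟩)
    · exact T.loopless.irrefl u h
    · exact G.loopless.irrefl u h

lemma T_le_gS {G T : SimpleGraph V} {S : Finset V} : T ≤ gS G T S := fun _ _ h => Or.inl h

lemma gS_le {G T : SimpleGraph V} (hTG : T ≤ G) (S : Finset V) : gS G T S ≤ G := by
  rintro u v (h | ⟨h, -, -⟩)
  · exact hTG h
  · exact h

lemma gS_connected {G T : SimpleGraph V} (hT : T.Connected) (S : Finset V) :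
    (gS G T S).Connected := hT.mono T_le_gS

lemma walk_to_gS {G T : SimpleGraph V} {S : Finset V} {x y : V} (p : G.Walk x y)
    (hp : ∀ z ∈ p.support, z ∈ S) : ∃ q : (gS G T S).Walk x y, q.length = p.length := by
  induction p with
  | nil => exact ⟨.nil, rfl⟩
  | @cons a b c h p ih =>
    obtain ⟨q, hq⟩ := ih (fun z hz => hp z (by simp [hz]))
    refine ⟨.cons (Or.inr ⟨h, hp a (by simp), hp b (by simp)⟩) q, congrArg (· + 1) hq⟩

/-- `u` and `v` are joined by a `T`-walk avoiding `c`. -/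
def Avoid (T : SimpleGraph V) (c u v : V) : Prop := ∃ p : T.Walk u v, c ∉ p.support

lemma Avoid.rfl {T : SimpleGraph V} {c u : V} (h : u ≠ c) : Avoid T c u u :=
  ⟨.nil, by simp [h.symm]⟩

lemma Avoid.symm {T : SimpleGraph V} {c u v : V} (h : Avoid T c u v) : Avoid T c v u := by
  obtain ⟨p, hp⟩ := h
  exact ⟨p.reverse, by simpa using hp⟩

lemma Avoid.trans {T : SimpleGraph V} {c u v w : V} (h : Avoid T c u v) (h' : Avoid T c v w) :
    Avoid T c u w := by
  obtain ⟨p, hp⟩ := h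
  obtain ⟨q, hq⟩ := h'
  refine ⟨p.append q, ?_⟩
  rw [SimpleGraph.Walk.mem_support_append_iff]
  tauto

/-- The class of `v` in `W.erase c` under the avoid-`c` relation. -/
noncomputable def cls (T : SimpleGraph V) (W : Finset V) (c v : V) : Finset V :=
  (W.erase c).filter (Avoid T c v)

lemma mem_cls {T : SimpleGraph V} {W : Finset V} {c v z : V} :
    z ∈ cls T W c v ↔ z ∈ W.erase c ∧ Avoid T c v z := by simp [cls]

lemma cls_eq_of_avoid {T : SimpleGraph V} {W : Finset V} {c a b : V} (h : Avoid T c a b) :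
    cls T W c a = cls T W c b := by
  ext z
  simp only [mem_cls]
  exact ⟨fun ⟨hz, h2⟩ => ⟨hz, h.symm.trans h2⟩, fun ⟨hz, h2⟩ => ⟨hz, h.trans h2⟩⟩

lemma cls_disjoint {T : SimpleGraph V} {W : Finset V} {c a b : V}
    (h : cls T W c a ≠ cls T W c b) : Disjoint (cls T W c a) (cls T W c b) := by
  rw [Finset.disjoint_left]
  intro z hza hzb
  exact h (by
    rw [mem_cls] at hza hzb
    exact (cls_eq_of_avoid (hza.2.trans hzb.2.symm)))

/-- `W` is closed under `T`-paths between its members. -/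
def TConvex (T : SimpleGraph V) (W : Finset V) : Prop :=
  ∀ u ∈ W, ∀ v ∈ W, ∀ p : T.Walk u v, p.IsPath → ∀ z ∈ p.support, z ∈ W

lemma tconvex_univ [Fintype V] (T : SimpleGraph V) : TConvex T Finset.univ :=
  fun _ _ _ _ _ _ _ _ => Finset.mem_univ _
variable {V : Type}

/-- In a tree, every path realizes the distance. -/
lemma path_length_eq_dist {T : SimpleGraph V} (hT : T.IsTree) {u v : V}
    (p : T.Walk u v) (hp : p.IsPath) : p.length = T.dist u v := by
  obtain ⟨w, hw⟩ := hT.isConnected.exists_walk_length_eq_dist u v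
  have hb : w.bypass.length = T.dist u v := by
    have h1 := SimpleGraph.Walk.length_bypass_le w
    have h2 := SimpleGraph.dist_le w.bypass
    omega
  have := hT.IsAcyclic.path_unique ⟨p, hp⟩ ⟨w.bypass, w.bypass_isPath⟩
  have : p = w.bypass := congrArg Subtype.val this
  rw [this, hb]

lemma dist_add_dist_le_of_mem_support {T : SimpleGraph V} {u v c : V}
    (w : T.Walk u v) (hc : c ∈ w.support) : T.dist u c + T.dist c v ≤ w.length := by
  have h1 := SimpleGraph.dist_le (w.takeUntil c hc)
  have h2 := SimpleGraph.dist_le (w.dropUntil c hc)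
  have h3 : (w.takeUntil c hc).length + (w.dropUntil c hc).length = w.length := by
    rw [← SimpleGraph.Walk.length_append, SimpleGraph.Walk.take_spec]
  omega

/-- If `u`, `v` are close in `T` but both far from `c`, then they avoid `c`. -/
lemma avoid_of_far {T : SimpleGraph V} (hTc : T.Connected) {ρ : ℕ} {u v c : V}
    (hd : T.dist u v ≤ 2 * ρ) (hu : ρ < T.dist u c) (hv : ρ < T.dist v c) :
    Avoid T c u v := by
  obtain ⟨w, hw⟩ := hTc.exists_walk_length_eq_dist u v
  by_cases hc : c ∈ w.support
  · exfalso
    have h1 := dist_add_dist_le_of_mem_support w hc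
    rw [hw] at h1
    have h2 : T.dist c v = T.dist v c := SimpleGraph.dist_comm
    omega
  · exact ⟨w, hc⟩

/-- Classes are convex. -/
lemma tconvex_cls {T : SimpleGraph V} (hT : T.IsTree) {W : Finset V} (hW : TConvex T W)
    (c v : V) : TConvex T (cls T W c v) := by
  intro u₁ h₁ u₂ h₂ p hp z hz
  rw [mem_cls] at h₁ h₂
  obtain ⟨w', hw'⟩ := h₁.2.symm.trans h₂.2
  have hpath : p = w'.bypass := by
    have := hT.IsAcyclic.path_unique ⟨p, hp⟩ ⟨w'.bypass, w'.bypass_isPath⟩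
    exact congrArg Subtype.val this
  have hcp : c ∉ p.support := by
    rw [hpath]
    exact fun hmem => hw' (w'.support_bypass_subset hmem)
  rw [mem_cls]
  constructor
  · rw [Finset.mem_erase]
    refine ⟨fun h => hcp (h ▸ hz), ?_⟩
    exact hW u₁ (Finset.mem_erase.mp h₁.1).2 u₂ (Finset.mem_erase.mp h₂.1).2 p hp z hz
  · refine h₁.2.trans ⟨p.takeUntil z hz, fun hmem => hcp (p.support_takeUntil_subset hz hmem)⟩

/-- Centroid: minimizer of total distance. -/
noncomputable def centroid (T : SimpleGraph V) (W : Finset V) (hW : W.Nonempty) : V :=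
  (Finset.exists_min_image W (fun c => ∑ v ∈ W, T.dist c v) hW).choose

lemma centroid_mem {T : SimpleGraph V} {W : Finset V} (hW : W.Nonempty) :
    centroid T W hW ∈ W :=
  (Finset.exists_min_image W (fun c => ∑ v ∈ W, T.dist c v) hW).choose_spec.1

lemma centroid_min {T : SimpleGraph V} {W : Finset V} (hW : W.Nonempty) :
    ∀ c' ∈ W, ∑ v ∈ W, T.dist (centroid T W hW) v ≤ ∑ v ∈ W, T.dist c' v :=
  (Finset.exists_min_image W (fun c => ∑ v ∈ W, T.dist c v) hW).choose_spec.2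

/-- Key centroid property: every class has at most half the vertices of `W`. -/
lemma two_mul_cls_card_le {T : SimpleGraph V} (hT : T.IsTree) {W : Finset V}
    (hW : TConvex T W) (hne : W.Nonempty) {v : V} (hv : v ∈ W.erase (centroid T W hne)) :
    2 * (cls T W (centroid T W hne) v).card ≤ W.card := by
  set c := centroid T W hne with hcdef
  by_contra hbig
  push_neg at hbig
  set K := cls T W c v with hKdef
  have hKsub : K ⊆ W := fun z hz => (Finset.mem_erase.mp (mem_cls.mp hz).1).2
  have hvW : v ∈ W := (Finset.mem_erase.mp hv).2
  have hvc : v ≠ c := (Finset.mem_erase.mp hv).1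
  have hcW : c ∈ W := centroid_mem hne
  obtain ⟨w0, hw0⟩ := hT.isConnected.exists_walk_length_eq_dist c v
  have hbp : w0.bypass.IsPath := w0.bypass_isPath
  obtain ⟨c', hadj, q, hq⟩ :=
    SimpleGraph.Walk.exists_eq_cons_of_ne (fun h : c = v => hvc h.symm) w0.bypass
  have hqpath : q.IsPath ∧ c ∉ q.support := by
    have := hbp
    rw [hq, SimpleGraph.Walk.cons_isPath_iff] at this
    exact this
  have hc'p : c' ∈ w0.bypass.support := by
    rw [hq, SimpleGraph.Walk.support_cons]
    exact List.mem_cons_of_mem _ q.start_mem_support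
  have hc'W : c' ∈ W := hW c hcW v hvW w0.bypass hbp c' hc'p
  have hc'v : Avoid T c c' v := ⟨q, hqpath.2⟩
  -- For z ∈ K : dist c' z + 1 = dist c z
  have hKdist : ∀ z ∈ K, T.dist c' z + 1 = T.dist c z := by
    intro z hz
    rw [mem_cls] at hz
    obtain ⟨w', hw'⟩ := hc'v.trans hz.2
    have hp' : w'.bypass.IsPath := w'.bypass_isPath
    have hcp' : c ∉ w'.bypass.support := fun hmem => hw' (w'.support_bypass_subset hmem)
    have h1 : w'.bypass.length = T.dist c' z := path_length_eq_dist hT _ hp'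
    have hconsPath : (SimpleGraph.Walk.cons hadj w'.bypass).IsPath := by
      rw [SimpleGraph.Walk.cons_isPath_iff]; exact ⟨hp', hcp'⟩
    have h2 : (SimpleGraph.Walk.cons hadj w'.bypass).length = T.dist c z :=
      path_length_eq_dist hT _ hconsPath
    rw [SimpleGraph.Walk.length_cons] at h2
    omega
  have hAll : ∀ z : V, T.dist c' z ≤ T.dist c z + 1 := by
    intro z
    have htr := hT.isConnected.dist_triangle (u := c') (v := c) (w := z)
    have h1 : T.dist c' c = 1 := by
      rw [SimpleGraph.dist_eq_one_iff_adj]; exact hadj.symm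
    omega
  -- sum comparison
  have hsum1 : ∑ z ∈ K, T.dist c z = ∑ z ∈ K, T.dist c' z + K.card := by
    have : ∑ z ∈ K, T.dist c z = ∑ z ∈ K, (T.dist c' z + 1) :=
      Finset.sum_congr rfl (fun z hz => (hKdist z hz).symm)
    rw [this, Finset.sum_add_distrib, Finset.sum_const, smul_eq_mul, mul_one]
  have hsum2 : ∑ z ∈ W \ K, T.dist c' z ≤ ∑ z ∈ W \ K, T.dist c z + (W \ K).card := by
    calc ∑ z ∈ W \ K, T.dist c' z ≤ ∑ z ∈ W \ K, (T.dist c z + 1) :=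
          Finset.sum_le_sum (fun z _ => hAll z)
      _ = ∑ z ∈ W \ K, T.dist c z + (W \ K).card := by
          rw [Finset.sum_add_distrib, Finset.sum_const, smul_eq_mul, mul_one]
  have hsplitc : ∑ z ∈ W, T.dist c z = ∑ z ∈ K, T.dist c z + ∑ z ∈ W \ K, T.dist c z := by
    rw [add_comm, Finset.sum_sdiff hKsub]
  have hsplitc' : ∑ z ∈ W, T.dist c' z = ∑ z ∈ K, T.dist c' z + ∑ z ∈ W \ K, T.dist c' z := by
    rw [add_comm, Finset.sum_sdiff hKsub]
  have hmin := centroid_min (T := T) hne c' hc'W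
  rw [← hcdef] at hmin
  have hcard : (W \ K).card = W.card - K.card := Finset.card_sdiff_of_subset hKsub
  have hKW : K.card ≤ W.card := Finset.card_le_card hKsub
  omega

/-! ### Shortest path trees -/

/-- Parent of `v` in a BFS tree of `G'` rooted at `c`. -/
noncomputable def pstep (G' : SimpleGraph V) (c v : V) : V :=
  if h : ∃ u, G'.Adj u v ∧ G'.dist c u + 1 = G'.dist c v then h.choose else v

lemma pstep_spec {G' : SimpleGraph V} (hc : G'.Connected) {c v : V} (hv : v ≠ c) :
    G'.Adj (pstep G' c v) v ∧ G'.dist c (pstep G' c v) + 1 = G'.dist c v := by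
  have hex : ∃ u, G'.Adj u v ∧ G'.dist c u + 1 = G'.dist c v := by
    obtain ⟨w, hw⟩ := hc.exists_walk_length_eq_dist c v
    have hdist : G'.dist c v ≠ 0 := by
      intro h0
      exact hv (hc.dist_eq_zero_iff.mp ((SimpleGraph.dist_comm (u := c)) ▸ h0)).symm
    obtain ⟨u, hadj, q, hq⟩ :=
      SimpleGraph.Walk.exists_eq_cons_of_ne (fun h : v = c => hv h) w.reverse
    refine ⟨u, hadj.symm, ?_⟩
    have hlq : q.length = w.length - 1 := by
      have := congrArg SimpleGraph.Walk.length hq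
      rw [SimpleGraph.Walk.length_reverse, SimpleGraph.Walk.length_cons] at this
      omega
    have h1 : G'.dist c u ≤ w.length - 1 := by
      have := SimpleGraph.dist_le q.reverse
      rw [SimpleGraph.Walk.length_reverse, hlq] at this
      exact this
    have h2 : G'.dist c v ≤ G'.dist c u + 1 := by
      have htr := hc.dist_triangle (u := c) (v := u) (w := v)
      have : G'.dist u v = 1 := by
        rw [SimpleGraph.dist_eq_one_iff_adj]; exact hadj.symm
      omega
    omega
  rw [pstep, dif_pos hex]
  exact hex.choose_spec

/-- BFS/shortest-path tree of `G'` rooted at `c`. -/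
noncomputable def spt (G' : SimpleGraph V) (c : V) : SimpleGraph V :=
  SimpleGraph.fromRel (fun a b => a ≠ c ∧ pstep G' c a = b)

lemma spt_le {G' : SimpleGraph V} (hc : G'.Connected) (c : V) : spt G' c ≤ G' := by
  intro a b hab
  rw [spt, SimpleGraph.fromRel_adj] at hab
  obtain ⟨hne, h | h⟩ := hab
  · obtain ⟨hac, hp⟩ := h
    have := (pstep_spec hc hac).1
    rw [hp] at this
    exact this.symm
  · obtain ⟨hbc, hp⟩ := h
    have := (pstep_spec hc hbc).1
    rw [hp] at this
    exact this

lemma spt_walk {G' : SimpleGraph V} (hc : G'.Connected) (c : V) :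
    ∀ v, ∃ p : (spt G' c).Walk c v, p.length ≤ G'.dist c v := by
  suffices h : ∀ n v, G'.dist c v = n → ∃ p : (spt G' c).Walk c v, p.length ≤ G'.dist c v by
    intro v; exact h _ v rfl
  intro n
  induction n using Nat.strong_induction_on with
  | _ n ih =>
    intro v hn
    by_cases hv : v = c
    · subst hv; exact ⟨.nil, by simp⟩
    · obtain ⟨hadj, hd⟩ := pstep_spec hc (c := c) hv
      obtain ⟨p, hp⟩ := ih (G'.dist c (pstep G' c v)) (by omega) (pstep G' c v) rfl
      have hadj' : (spt G' c).Adj (pstep G' c v) v := by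
        rw [spt, SimpleGraph.fromRel_adj]
        exact ⟨hadj.ne, Or.inr ⟨hv, rfl⟩⟩
      refine ⟨p.concat hadj', ?_⟩
      rw [SimpleGraph.Walk.length_concat]
      omega

/-- Count of non-`T` edges of the shortest path tree of a region graph. -/
lemma spt_nonT_card {G T : SimpleGraph V} (hTc : T.Connected) (S : Finset V) (c : V) :
    ((spt (gS G T S) c).edgeSet \ T.edgeSet).ncard ≤ S.card - 1 := by
  classical
  have hc : (gS G T S).Connected := gS_connected hTc S
  -- every such edge is s(a, pstep a) with a ∈ S, pstep a ∈ S
  have key : ∀ e ∈ (spt (gS G T S) c).edgeSet \ T.edgeSet,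
      ∃ a, a ≠ c ∧ e = s(a, pstep (gS G T S) c a) ∧ a ∈ S ∧ pstep (gS G T S) c a ∈ S := by
    rintro e ⟨he, heT⟩
    induction e with
    | h a b =>
      rw [SimpleGraph.mem_edgeSet] at he
      rw [spt, SimpleGraph.fromRel_adj] at he
      obtain ⟨hne, h | h⟩ := he
      · obtain ⟨hac, hp⟩ := h
        have hadj := (pstep_spec hc hac).1
        rw [hp] at hadj
        have hGS : (gS G T S).Adj a b := hadj.symm
        have hnT : ¬ T.Adj a b := by
          intro hT'
          exact heT (by rw [SimpleGraph.mem_edgeSet]; exact hT')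
        rcases hGS with h' | ⟨-, ha, hb⟩
        · exact absurd h' hnT
        · exact ⟨a, hac, by rw [hp], ha, by rw [hp]; exact hb⟩
      · obtain ⟨hbc, hp⟩ := h
        have hadj := (pstep_spec hc hbc).1
        rw [hp] at hadj
        have hGS : (gS G T S).Adj b a := hadj.symm
        have hnT : ¬ T.Adj b a := by
          intro hT'
          exact heT (by rw [SimpleGraph.mem_edgeSet]; exact hT'.symm)
        rcases hGS with h' | ⟨-, hb, ha⟩
        · exact absurd h' hnT
        · exact ⟨b, hbc, by rw [hp, Sym2.eq_swap], hb, by rw [hp]; exact ha⟩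
  rcases S.eq_empty_or_nonempty with hS | hS
  · have : (spt (gS G T S) c).edgeSet \ T.edgeSet = ∅ := by
      ext e
      simp only [Set.mem_empty_iff_false, iff_false]
      intro he
      obtain ⟨a, -, -, ha, -⟩ := key e he
      simp [hS] at ha
    simp [this]
  · -- x* : closest vertex of S to c
    obtain ⟨x, hxS, hxmin⟩ := Finset.exists_min_image S (fun v => (gS G T S).dist c v) hS
    set D := (spt (gS G T S) c).edgeSet \ T.edgeSet with hD
    have hmaps : ∀ e ∈ D, (fun e => if he : e ∈ D then (key e he).choose else c) e
        ∈ (↑(S.erase x) : Set V) := by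
      intro e he
      simp only [dif_pos he]
      obtain ⟨hac, hee, haS, hpS⟩ := (key e he).choose_spec
      simp only [Finset.coe_erase, Set.mem_diff, Finset.mem_coe, Set.mem_singleton_iff]
      refine ⟨haS, ?_⟩
      intro hax
      have hd := (pstep_spec hc hac).2
      have hm := hxmin _ hpS
      rw [← hax] at hm
      omega
    have hinj : Set.InjOn (fun e => if he : e ∈ D then (key e he).choose else c) D := by
      intro e he e' he' heq
      simp only [dif_pos he, dif_pos he'] at heq
      have h1 := (key e he).choose_spec
      have h2 := (key e' he').choose_spec
      rw [h1.2.1, h2.2.1, heq]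
    have hle := Set.ncard_le_ncard_of_injOn _ hmaps hinj (Set.toFinite _)
    rw [Set.ncard_coe_finset, Finset.card_erase_of_mem hxS] at hle
    exact hle

/-! ### The spanner construction -/

noncomputable def spanner (G T : SimpleGraph V) (ρ : ℕ) : ℕ → Finset V → Finset V → SimpleGraph V
  | 0, _, _ => ⊥
  | fuel + 1, W, S =>
    if hW : 2 ≤ W.card then
      spt (gS G T S) (centroid T W (Finset.card_pos.mp (by omega))) ⊔
        ((W.erase (centroid T W (Finset.card_pos.mp (by omega)))).image
            (cls T W (centroid T W (Finset.card_pos.mp (by omega))))).sup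
          (fun K => spanner G T ρ fuel K
            ((S.filter (fun z => ρ < T.dist z (centroid T W (Finset.card_pos.mp (by omega))))) ∩ K))
    else ⊥

lemma spanner_zero (G T : SimpleGraph V) (ρ : ℕ) (W S : Finset V) :
    spanner G T ρ 0 W S = ⊥ := rfl

lemma spanner_succ (G T : SimpleGraph V) (ρ fuel : ℕ) (W S : Finset V) :
    spanner G T ρ (fuel + 1) W S =
    if hW : 2 ≤ W.card then
      spt (gS G T S) (centroid T W (Finset.card_pos.mp (by omega))) ⊔
        ((W.erase (centroid T W (Finset.card_pos.mp (by omega)))).image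
            (cls T W (centroid T W (Finset.card_pos.mp (by omega))))).sup
          (fun K => spanner G T ρ fuel K
            ((S.filter (fun z => ρ < T.dist z (centroid T W (Finset.card_pos.mp (by omega))))) ∩ K))
    else ⊥ := rfl

lemma spanner_le {G T : SimpleGraph V} (hTG : T ≤ G) (hTc : T.Connected) (ρ : ℕ) :
    ∀ fuel W S, spanner G T ρ fuel W S ≤ G := by
  intro fuel
  induction fuel with
  | zero => intro W S; rw [spanner_zero]; exact bot_le
  | succ fuel ih =>
    intro W S
    rw [spanner_succ]
    split
    · exact sup_le ((spt_le (gS_connected hTc S) _).trans (gS_le hTG S))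
        (Finset.sup_le (fun K _ => ih K _))
    · exact bot_le

/-- All support vertices of a `G`-walk staying far from `c` avoid `c` from the start. -/
lemma walk_support_avoid {G T : SimpleGraph V} (hTc : T.Connected) {ρ : ℕ}
    (hst : ∀ u v, G.Adj u v → T.dist u v ≤ 2 * ρ) {c : V} :
    ∀ {x y : V} (p : G.Walk x y), (∀ z ∈ p.support, ρ < T.dist z c) →
      ∀ z ∈ p.support, Avoid T c x z := by
  intro x y p
  induction p with
  | nil =>
    intro hfar z hz
    simp only [SimpleGraph.Walk.support_nil, List.mem_singleton] at hz
    subst hz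
    refine Avoid.rfl ?_
    have := hfar z (by simp)
    intro hzc
    rw [hzc, SimpleGraph.dist_self] at this
    omega
  | @cons a b w hadj p ih =>
    intro hfar z hz
    rw [SimpleGraph.Walk.support_cons, List.mem_cons] at hz
    have hane : a ≠ c := by
      have := hfar a (by simp)
      intro hzc
      rw [hzc, SimpleGraph.dist_self] at this
      omega
    rcases hz with rfl | hz
    · exact Avoid.rfl hane
    · have hab : Avoid T c a b :=
        avoid_of_far hTc (hst a b hadj) (hfar a (by simp)) (hfar b (by simp))
      exact hab.trans (ih (fun z hz => hfar z (by simp [hz])) z hz)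

/-- Main routing lemma. -/
lemma routing {G T : SimpleGraph V} (hT : T.IsTree) (hTG : T ≤ G) {ρ : ℕ}
    (hst : ∀ u v, G.Adj u v → T.dist u v ≤ 2 * ρ) :
    ∀ fuel (W S : Finset V), TConvex T W → S ⊆ W → W.card ≤ fuel →
      ∀ x y (p : G.Walk x y), (∀ z ∈ p.support, z ∈ S) →
      ∃ q : (T ⊔ spanner G T ρ fuel W S).Walk x y, q.length ≤ p.length + 2 * ρ := by
  intro fuel
  induction fuel with
  | zero =>
    intro W S _ hSW hcard x y p hsupp
    exfalso
    have hx : x ∈ W := hSW (hsupp x p.start_mem_support)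
    have : W.Nonempty := ⟨x, hx⟩
    rw [← Finset.card_pos] at this
    omega
  | succ fuel IH =>
    intro W S hconv hSW hcard x y p hsupp
    by_cases hW : 2 ≤ W.card
    · have hne : W.Nonempty := Finset.card_pos.mp (by omega)
      set c := centroid T W hne with hcdef
      have hsp : spanner G T ρ (fuel + 1) W S =
          spt (gS G T S) c ⊔
            ((W.erase c).image (cls T W c)).sup
              (fun K => spanner G T ρ fuel K ((S.filter (fun z => ρ < T.dist z c)) ∩ K)) := by
        rw [spanner_succ, dif_pos hW]
      by_cases hhit : ∃ z ∈ p.support, T.dist z c ≤ ρ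
      · -- route through c via the shortest path tree
        obtain ⟨z, hz, hzd⟩ := hhit
        have hGSc : (gS G T S).Connected := gS_connected hT.isConnected S
        obtain ⟨q1, hq1⟩ := walk_to_gS (G := G) (T := T) (p.takeUntil z hz)
          (fun a ha => hsupp a (p.support_takeUntil_subset hz ha))
        obtain ⟨q2, hq2⟩ := walk_to_gS (G := G) (T := T) (p.dropUntil z hz)
          (fun a ha => hsupp a (p.support_dropUntil_subset hz ha))
        obtain ⟨tz, htz⟩ := hT.isConnected.exists_walk_length_eq_dist z c
        have hlen12 : (p.takeUntil z hz).length + (p.dropUntil z hz).length = p.length := by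
          rw [← SimpleGraph.Walk.length_append, SimpleGraph.Walk.take_spec]
        -- dist from c to x in gS
        have hd1 : (gS G T S).dist c x ≤ (p.takeUntil z hz).length + ρ := by
          have := SimpleGraph.dist_le ((q1.append (tz.mapLe T_le_gS)).reverse)
          rw [SimpleGraph.Walk.length_reverse, SimpleGraph.Walk.length_append,
            SimpleGraph.Walk.length_map, hq1, htz] at this
          omega
        have hd2 : (gS G T S).dist c y ≤ ρ + (p.dropUntil z hz).length := by
          have := SimpleGraph.dist_le ((tz.mapLe T_le_gS).reverse.append q2)
          rw [SimpleGraph.Walk.length_append, SimpleGraph.Walk.length_reverse,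
            SimpleGraph.Walk.length_map, hq2, htz] at this
          omega
        obtain ⟨w1, hw1⟩ := spt_walk hGSc c x
        obtain ⟨w2, hw2⟩ := spt_walk hGSc c y
        have hle : spt (gS G T S) c ≤ T ⊔ spanner G T ρ (fuel + 1) W S := by
          rw [hsp]
          exact le_sup_left.trans le_sup_right
        refine ⟨(w1.reverse.append w2).mapLe hle, ?_⟩
        rw [SimpleGraph.Walk.length_map, SimpleGraph.Walk.length_append,
          SimpleGraph.Walk.length_reverse]
        omega
      · -- recurse into the class of x
        push_neg at hhit
        have hxS : x ∈ S := hsupp x p.start_mem_support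
        have hxc : x ≠ c := by
          have := hhit x p.start_mem_support
          intro hxc
          rw [hxc, SimpleGraph.dist_self] at this
          omega
        have hxW : x ∈ W.erase c := Finset.mem_erase.mpr ⟨hxc, hSW hxS⟩
        set K := cls T W c x with hKdef
        set S' := (S.filter (fun z => ρ < T.dist z c)) ∩ K with hS'def
        have hsupp' : ∀ z ∈ p.support, z ∈ S' := by
          intro z hz
          have havoid := walk_support_avoid hT.isConnected hst p hhit z hz
          have hzS : z ∈ S := hsupp z hz
          have hzc : z ≠ c := by
            have := hhit z hz
            intro hzc
            rw [hzc, SimpleGraph.dist_self] at this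
            omega
          rw [hS'def, Finset.mem_inter, Finset.mem_filter]
          exact ⟨⟨hzS, hhit z hz⟩, mem_cls.mpr ⟨Finset.mem_erase.mpr ⟨hzc, hSW hzS⟩, havoid⟩⟩
        have hKcard : K.card ≤ fuel := by
          have h1 : K ⊆ W.erase c := Finset.filter_subset _ _
          have h2 := Finset.card_le_card h1
          rw [Finset.card_erase_of_mem (centroid_mem hne)] at h2
          omega
        obtain ⟨q, hq⟩ := IH K S' (tconvex_cls hT hconv c x) Finset.inter_subset_right
          hKcard x y p hsupp'
        have hle : T ⊔ spanner G T ρ fuel K S' ≤ T ⊔ spanner G T ρ (fuel + 1) W S := by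
          rw [hsp]
          refine sup_le_sup_left ?_ T
          exact le_sup_of_le_right
            (Finset.le_sup
              (f := fun K => spanner G T ρ fuel K ((S.filter (fun z => ρ < T.dist z c)) ∩ K))
              (Finset.mem_image_of_mem _ hxW))
        exact ⟨q.mapLe hle, by rwa [SimpleGraph.Walk.length_map]⟩
    · -- tiny region: x = y
      have hx : x ∈ S := hsupp x p.start_mem_support
      have hy : y ∈ S := hsupp y p.end_mem_support
      have hxy : x = y := by
        have hS1 : S.card ≤ 1 := le_trans (Finset.card_le_card hSW) (by omega)
        exact Finset.card_le_one.mp hS1 x hx y hy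
      subst hxy
      exact ⟨.nil, by simp⟩

/-! ### Real-number helper lemmas -/

lemma logb_two_ge {r : ℝ} (hr : 1 ≤ r) : 1 - 1/r ≤ Real.logb 2 r := by
  have h0 : (0:ℝ) < r := by linarith
  have hlog : 1 - 1/r ≤ Real.log r := by
    have h := Real.log_le_sub_one_of_pos (x := r⁻¹) (by positivity)
    rw [Real.log_inv] at h
    have : 1/r = r⁻¹ := one_div r
    rw [this]
    linarith
  have h2 : Real.log r ≤ Real.logb 2 r := by
    rw [Real.logb]
    have hl2 : Real.log 2 ≤ 1 := by
      have := Real.log_le_sub_one_of_pos (x := 2) (by norm_num)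
      linarith
    have hl2pos : 0 < Real.log 2 := Real.log_pos (by norm_num)
    have hlr : 0 ≤ Real.log r := Real.log_nonneg hr
    rw [le_div_iff₀ hl2pos]
    nlinarith
  linarith

lemma coef_nonneg {w : ℕ} (hw : 2 ≤ w) : 0 ≤ Real.logb 2 w - 2 + 2 / (w:ℝ) := by
  have hw2 : (2:ℝ) ≤ (w:ℝ) := by exact_mod_cast hw
  have hw0 : (0:ℝ) < (w:ℝ) := by linarith
  have hw1 : (1:ℝ) ≤ (w:ℝ)/2 := by linarith
  have h1 := logb_two_ge hw1
  have hsplit : Real.logb 2 (w:ℝ) = 1 + Real.logb 2 ((w:ℝ)/2) := by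
    have hd : Real.logb 2 ((w:ℝ)/2) = Real.logb 2 (w:ℝ) - Real.logb 2 2 :=
      Real.logb_div (by positivity) two_ne_zero
    rw [hd, Real.logb_self_eq_one (by norm_num)]; ring
  have hdiv : 1/((w:ℝ)/2) = 2/(w:ℝ) := by rw [one_div_div]
  rw [hsplit]
  rw [hdiv] at h1
  linarith

lemma child_bound {wK w : ℕ} (h1 : 1 ≤ wK) (h2 : 2 * wK ≤ w) {s : ℝ} (hs : 0 ≤ s) :
    s * Real.logb 2 wK - s + s / wK ≤ s * (Real.logb 2 w - 2 + 2 / (w:ℝ)) := by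
  have hwK0 : (0:ℝ) < (wK:ℝ) := by exact_mod_cast h1
  have hw2 : (2:ℝ) * wK ≤ (w:ℝ) := by exact_mod_cast h2
  have hw0 : (0:ℝ) < (w:ℝ) := by nlinarith
  set r : ℝ := (w:ℝ) / (2 * wK) with hr
  have hr1 : 1 ≤ r := by
    rw [hr, le_div_iff₀ (by positivity)]
    linarith
  have hr0 : (0:ℝ) < r := by linarith
  have hwr : (w:ℝ) = 2 * (wK:ℝ) * r := by
    rw [hr]; field_simp
  have hlog : Real.logb 2 (w:ℝ) = 1 + Real.logb 2 (wK:ℝ) + Real.logb 2 r := by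
    rw [hwr, Real.logb_mul (by positivity) (by positivity),
      Real.logb_mul two_ne_zero (by positivity), Real.logb_self_eq_one (by norm_num)]
  have h3 : (1/(wK:ℝ)) * (1 - 1/r) ≤ Real.logb 2 r := by
    have hA := logb_two_ge hr1
    have hA' : 0 ≤ 1 - 1/r := by
      have : 1/r ≤ 1 := by rw [div_le_one hr0]; linarith
      linarith
    have hB : 1/(wK:ℝ) ≤ 1 := by
      rw [div_le_one hwK0]; exact_mod_cast h1
    nlinarith
  have h4 : 2/(w:ℝ) = 1/(wK:ℝ) * (1/r) := by
    rw [hwr]; field_simp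
  have key : Real.logb 2 (wK:ℝ) - 1 + 1/(wK:ℝ) ≤ Real.logb 2 (w:ℝ) - 2 + 2/(w:ℝ) := by
    rw [hlog, h4]
    have : (1/(wK:ℝ)) - (1/(wK:ℝ)) * (1/r) = (1/(wK:ℝ)) * (1 - 1/r) := by ring
    linarith [h3]
  have := mul_le_mul_of_nonneg_left key hs
  have hrw1 : s * (Real.logb 2 (wK:ℝ) - 1 + 1/(wK:ℝ)) =
      s * Real.logb 2 wK - s + s / wK := by ring
  linarith [hrw1 ▸ this]

lemma spt_real_bound {sN wN : ℕ} (hsw : sN ≤ wN) (hw : 1 ≤ wN) :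
    ((sN - 1 : ℕ) : ℝ) ≤ (sN:ℝ) - (sN:ℝ)/(wN:ℝ) := by
  have hw0 : (0:ℝ) < (wN:ℝ) := by exact_mod_cast hw
  rcases Nat.eq_zero_or_pos sN with h | h
  · subst h; simp
  · rw [Nat.cast_sub h]
    have : (sN:ℝ)/(wN:ℝ) ≤ 1 := by
      rw [div_le_one hw0]; exact_mod_cast hsw
    simp only [Nat.cast_one]
    linarith

/-! ### Edge counting -/

lemma sup_nonT_le [Fintype V] (TE : Set (Sym2 V)) (C : Finset (Finset V))
    (f : Finset V → SimpleGraph V) :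
    ((C.sup f).edgeSet \ TE).ncard ≤ ∑ K ∈ C, ((f K).edgeSet \ TE).ncard := by
  classical
  induction C using Finset.cons_induction with
  | empty => simp [Finset.sup_empty, SimpleGraph.edgeSet_bot]
  | cons a C ha ih =>
    rw [Finset.sup_cons, Finset.sum_cons]
    calc ((f a ⊔ C.sup f).edgeSet \ TE).ncard
        = (((f a).edgeSet \ TE) ∪ ((C.sup f).edgeSet \ TE)).ncard := by
          rw [SimpleGraph.edgeSet_sup, Set.union_diff_distrib]
      _ ≤ ((f a).edgeSet \ TE).ncard + ((C.sup f).edgeSet \ TE).ncard :=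
          Set.ncard_union_le _ _
      _ ≤ _ := by omega

/-- Main edge-counting lemma. -/
lemma counting [Fintype V] {G T : SimpleGraph V} (hT : T.IsTree) (ρ : ℕ) :
    ∀ fuel (W S : Finset V), TConvex T W → S ⊆ W → W.card ≤ fuel →
    ((((spanner G T ρ fuel W S).edgeSet \ T.edgeSet).ncard : ℝ)) ≤
      S.card * Real.logb 2 W.card - S.card + S.card / W.card := by
  intro fuel
  induction fuel with
  | zero =>
    intro W S _ hSW hcard
    have hW : W = ∅ := Finset.card_eq_zero.mp (by omega)
    have hS : S = ∅ := Finset.subset_empty.mp (hW ▸ hSW)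
    subst hW hS
    simp [spanner_zero, SimpleGraph.edgeSet_bot]
  | succ fuel IH =>
    intro W S hconv hSW hcard
    by_cases hW : 2 ≤ W.card
    · have hne : W.Nonempty := Finset.card_pos.mp (by omega)
      set c := centroid T W hne with hcdef
      set S'' := S.filter (fun z => ρ < T.dist z c) with hS''def
      set C := (W.erase c).image (cls T W c) with hCdef
      set f : Finset V → SimpleGraph V := fun K => spanner G T ρ fuel K (S'' ∩ K) with hfdef
      have hsp : spanner G T ρ (fuel + 1) W S = spt (gS G T S) c ⊔ C.sup f := by
        rw [spanner_succ, dif_pos hW]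
      rw [hsp]
      have hwpos : (0:ℝ) < (W.card : ℝ) := by
        have : (2:ℝ) ≤ (W.card:ℝ) := by exact_mod_cast hW
        linarith
      have hsw : S.card ≤ W.card := Finset.card_le_card hSW
      -- split the count
      have hsplit : (((spt (gS G T S) c ⊔ C.sup f).edgeSet \ T.edgeSet).ncard : ℝ) ≤
          (((spt (gS G T S) c).edgeSet \ T.edgeSet).ncard : ℝ) +
          (((C.sup f).edgeSet \ T.edgeSet).ncard : ℝ) := by
        have : ((spt (gS G T S) c ⊔ C.sup f).edgeSet \ T.edgeSet).ncard ≤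
            ((spt (gS G T S) c).edgeSet \ T.edgeSet).ncard +
            ((C.sup f).edgeSet \ T.edgeSet).ncard := by
          calc ((spt (gS G T S) c ⊔ C.sup f).edgeSet \ T.edgeSet).ncard
              = ((((spt (gS G T S) c).edgeSet \ T.edgeSet) ∪
                  ((C.sup f).edgeSet \ T.edgeSet))).ncard := by
                rw [SimpleGraph.edgeSet_sup, Set.union_diff_distrib]
            _ ≤ _ := Set.ncard_union_le _ _
        exact_mod_cast this
      -- spt part
      have hA : (((spt (gS G T S) c).edgeSet \ T.edgeSet).ncard : ℝ) ≤
          (S.card:ℝ) - (S.card:ℝ)/(W.card:ℝ) := by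
        have h1 := spt_nonT_card (G := G) hT.isConnected S c
        have h2 := spt_real_bound hsw (by omega)
        calc (((spt (gS G T S) c).edgeSet \ T.edgeSet).ncard : ℝ)
            ≤ ((S.card - 1 : ℕ) : ℝ) := by exact_mod_cast h1
          _ ≤ _ := h2
      -- children part
      have hcoef : 0 ≤ Real.logb 2 W.card - 2 + 2/(W.card:ℝ) := coef_nonneg hW
      have hchild : ∀ K ∈ C, (((f K).edgeSet \ T.edgeSet).ncard : ℝ) ≤
          ((S'' ∩ K).card : ℝ) * (Real.logb 2 W.card - 2 + 2/(W.card:ℝ)) := by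
        intro K hK
        obtain ⟨v, hv, rfl⟩ := Finset.mem_image.mp hK
        have h1 : 1 ≤ (cls T W c v).card := Finset.card_pos.mpr
          ⟨v, mem_cls.mpr ⟨hv, Avoid.rfl (Finset.mem_erase.mp hv).1⟩⟩
        have h2 := two_mul_cls_card_le hT hconv hne hv
        have hKf : (cls T W c v).card ≤ fuel := by
          have hsub : cls T W c v ⊆ W.erase c := Finset.filter_subset _ _
          have := Finset.card_le_card hsub
          rw [Finset.card_erase_of_mem (centroid_mem hne)] at this
          omega
        have hIH := IH (cls T W c v) (S'' ∩ cls T W c v)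
          (tconvex_cls hT hconv c v) Finset.inter_subset_right hKf
        calc (((f (cls T W c v)).edgeSet \ T.edgeSet).ncard : ℝ)
            ≤ ((S'' ∩ cls T W c v).card : ℝ) * Real.logb 2 (cls T W c v).card -
              ((S'' ∩ cls T W c v).card : ℝ) +
              ((S'' ∩ cls T W c v).card : ℝ) / ((cls T W c v).card : ℝ) := hIH
          _ ≤ _ := child_bound h1 h2 (by positivity)
      have hsum : ∑ K ∈ C, (((f K).edgeSet \ T.edgeSet).ncard : ℝ) ≤
          ((S.card:ℝ)) * (Real.logb 2 W.card - 2 + 2/(W.card:ℝ)) := by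
        calc ∑ K ∈ C, (((f K).edgeSet \ T.edgeSet).ncard : ℝ)
            ≤ ∑ K ∈ C, ((S'' ∩ K).card : ℝ) * (Real.logb 2 W.card - 2 + 2/(W.card:ℝ)) :=
              Finset.sum_le_sum hchild
          _ = (∑ K ∈ C, ((S'' ∩ K).card : ℝ)) * (Real.logb 2 W.card - 2 + 2/(W.card:ℝ)) := by
              rw [Finset.sum_mul]
          _ ≤ (S.card:ℝ) * (Real.logb 2 W.card - 2 + 2/(W.card:ℝ)) := by
              apply mul_le_mul_of_nonneg_right _ hcoef
              have hdisj : ∀ K ∈ C, ∀ K' ∈ C, K ≠ K' →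
                  Disjoint (S'' ∩ K) (S'' ∩ K') := by
                intro K hK K' hK' hne'
                obtain ⟨a, ha, rfl⟩ := Finset.mem_image.mp hK
                obtain ⟨b, hb, rfl⟩ := Finset.mem_image.mp hK'
                exact Disjoint.mono Finset.inter_subset_right Finset.inter_subset_right
                  (cls_disjoint hne')
              have hcards : ∑ K ∈ C, (S'' ∩ K).card = (C.biUnion (fun K => S'' ∩ K)).card :=
                (Finset.card_biUnion hdisj).symm
              have hsub : C.biUnion (fun K => S'' ∩ K) ⊆ S := by
                intro z hz
                obtain ⟨K, -, hzK⟩ := Finset.mem_biUnion.mp hz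
                exact Finset.filter_subset _ S (Finset.mem_inter.mp hzK).1
              have : ∑ K ∈ C, (S'' ∩ K).card ≤ S.card := by
                rw [hcards]; exact Finset.card_le_card hsub
              exact_mod_cast this
      have hBsum : (((C.sup f).edgeSet \ T.edgeSet).ncard : ℝ) ≤
          ∑ K ∈ C, (((f K).edgeSet \ T.edgeSet).ncard : ℝ) := by
        have := sup_nonT_le (T.edgeSet) C f
        calc (((C.sup f).edgeSet \ T.edgeSet).ncard : ℝ)
            ≤ ((∑ K ∈ C, ((f K).edgeSet \ T.edgeSet).ncard : ℕ) : ℝ) := by exact_mod_cast this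
          _ = _ := by push_cast; ring
      have hfinal : (S.card:ℝ) - (S.card:ℝ)/(W.card:ℝ) +
          (S.card:ℝ) * (Real.logb 2 W.card - 2 + 2/(W.card:ℝ)) =
          (S.card:ℝ) * Real.logb 2 W.card - S.card + (S.card:ℝ)/(W.card:ℝ) := by
        field_simp
        ring
      linarith [hsplit, hA, hBsum, hsum]
    · -- degenerate: W.card ≤ 1
      have hsp : spanner G T ρ (fuel + 1) W S = ⊥ := by
        rw [spanner_succ, dif_neg hW]
      rw [hsp]
      simp only [SimpleGraph.edgeSet_bot, Set.empty_diff, Set.ncard_empty, Nat.cast_zero]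
      have hcard1 : W.card = 0 ∨ W.card = 1 := by omega
      rcases hcard1 with h | h
      · have hWe : W = ∅ := Finset.card_eq_zero.mp h
        have hS : S = ∅ := Finset.subset_empty.mp (hWe ▸ hSW)
        simp [hS, hWe]
      · have hs1 : S.card ≤ 1 := h ▸ Finset.card_le_card hSW
        rw [h]
        simp only [Nat.cast_one, Real.logb_one, mul_zero, div_one, zero_sub]
        linarith
end Stmt8


open Stmt8

/-- Every connected graph with `n ≥ 4` vertices admitting a multiplicative
tree `t`-spanner admits an additive `(2⌈t/2⌉·log₂ n)`-spanner with at most `n·log₂ n` edges. -/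
theorem stmt8 {V : Type} [Fintype V] (G : SimpleGraph V) (hG : G.Connected)
    (t : ℕ) (ht : 1 ≤ t) (hn : 4 ≤ Fintype.card V)
    (h : ∃ T : SimpleGraph V, T ≤ G ∧ T.IsTree ∧ ∀ u v : V, T.dist u v ≤ t * G.dist u v) :
    ∃ H : SimpleGraph V, H ≤ G ∧ H.Connected ∧
      (Nat.card H.edgeSet : ℝ) ≤ (Fintype.card V : ℝ) * Real.logb 2 (Fintype.card V) ∧
      ∀ x y : V, (H.dist x y : ℝ) ≤
        (G.dist x y : ℝ) + 2 * (((t + 1) / 2 : ℕ) : ℝ) * Real.logb 2 (Fintype.card V) := by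
  classical
  obtain ⟨T, hTG, hT, hstretch⟩ := h
  set n := Fintype.card V with hn'
  set ρ := (t + 1) / 2 with hρ
  have hst : ∀ u v, G.Adj u v → T.dist u v ≤ 2 * ρ := by
    intro u v hadj
    have h1 := hstretch u v
    have h2 : G.dist u v = 1 := SimpleGraph.dist_eq_one_iff_adj.mpr hadj
    rw [h2, mul_one] at h1
    omega
  set H := T ⊔ spanner G T ρ n Finset.univ Finset.univ with hH
  have hHG : H ≤ G := sup_le hTG (spanner_le hTG hT.isConnected ρ n _ _)
  have hHconn : H.Connected := hT.isConnected.mono le_sup_left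
  refine ⟨H, hHG, hHconn, ?_, ?_⟩
  · -- edge count
    have hunion : H.edgeSet = T.edgeSet ∪
        ((spanner G T ρ n Finset.univ Finset.univ).edgeSet \ T.edgeSet) := by
      rw [Set.union_diff_self, hH, SimpleGraph.edgeSet_sup]
    have hcount : (((spanner G T ρ n Finset.univ Finset.univ).edgeSet \ T.edgeSet).ncard : ℝ) ≤
        (n:ℝ) * Real.logb 2 n - n + 1 := by
      have := counting (G := G) hT ρ n Finset.univ Finset.univ (tconvex_univ T)
        (Finset.Subset.refl _) (by rw [Finset.card_univ])
      rw [Finset.card_univ] at this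
      have hdiv : (n:ℝ)/(n:ℝ) = 1 := by
        have : (0:ℝ) < n := by
          have : (4:ℝ) ≤ (n:ℝ) := by exact_mod_cast hn
          linarith
        field_simp
      rw [hdiv] at this
      exact this
    have hTedge : (T.edgeSet.ncard : ℝ) = (n:ℝ) - 1 := by
      have h1 : T.edgeSet.ncard = Nat.card T.edgeSet := (Nat.card_coe_set_eq _).symm
      have h2 : Nat.card T.edgeSet = T.edgeFinset.card := by
        rw [Nat.card_eq_fintype_card, SimpleGraph.edgeFinset_card]
      have h3 : T.edgeFinset.card + 1 = n := hT.card_edgeFinset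
      rw [h1, h2]
      have : (T.edgeFinset.card : ℝ) + 1 = (n:ℝ) := by exact_mod_cast h3
      linarith
    have hsplit : (H.edgeSet.ncard : ℝ) ≤ (T.edgeSet.ncard : ℝ) +
        (((spanner G T ρ n Finset.univ Finset.univ).edgeSet \ T.edgeSet).ncard : ℝ) := by
      have : H.edgeSet.ncard ≤ T.edgeSet.ncard +
          ((spanner G T ρ n Finset.univ Finset.univ).edgeSet \ T.edgeSet).ncard := by
        rw [hunion]
        exact Set.ncard_union_le _ _
      exact_mod_cast this
    have hNat : (Nat.card H.edgeSet : ℝ) = (H.edgeSet.ncard : ℝ) := by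
      rw [Nat.card_coe_set_eq]
    rw [hNat]
    calc (H.edgeSet.ncard : ℝ) ≤ ((n:ℝ) - 1) + ((n:ℝ) * Real.logb 2 n - n + 1) := by
          rw [← hTedge]; linarith
      _ = (n:ℝ) * Real.logb 2 n := by ring
  · -- distances
    intro x y
    obtain ⟨p, hp⟩ := hG.exists_walk_length_eq_dist x y
    obtain ⟨q, hq⟩ := routing hT hTG hst n Finset.univ Finset.univ (tconvex_univ T)
      (Finset.Subset.refl _) (by rw [Finset.card_univ]) x y p (fun z _ => Finset.mem_univ z)
    have hHd : H.dist x y ≤ G.dist x y + 2 * ρ := by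
      have hd := SimpleGraph.dist_le q
      rw [hp] at hq
      rw [hH]
      omega
    have hlogb : (1:ℝ) ≤ Real.logb 2 n := by
      have h2n : (2:ℝ) ≤ (n:ℝ) := by
        have : (4:ℝ) ≤ (n:ℝ) := by exact_mod_cast hn
        linarith
      calc (1:ℝ) = Real.logb 2 2 := (Real.logb_self_eq_one (by norm_num)).symm
        _ ≤ Real.logb 2 n := Real.logb_le_logb_of_le (by norm_num) (by norm_num) h2n
    have hcast : (H.dist x y : ℝ) ≤ (G.dist x y : ℝ) + 2 * (ρ:ℝ) := by
      exact_mod_cast hHd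
    have hmul : 2 * (ρ:ℝ) ≤ 2 * (ρ:ℝ) * Real.logb 2 n := by
      nlinarith [Nat.cast_nonneg (α := ℝ) ρ]
    calc (H.dist x y : ℝ) ≤ (G.dist x y : ℝ) + 2 * (ρ:ℝ) := hcast
      _ ≤ (G.dist x y : ℝ) + 2 * (ρ:ℝ) * Real.logb 2 n := by linarith
end

section
/- Every finite connected chordal graph G = (V,E) contains a maximal clique C such that every connected component of the graph induced by V ∖ C has at most |V|/2 vertices. -/
open SimpleGraph

section AuxStmt10

variable {V : Type}

/-- On a shortest walk, the prefix and suffix at any support vertex are shortest. -/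
lemma aux_takeUntil_dist {G : SimpleGraph V} [DecidableEq V] {u w x : V} (p : G.Walk u w)
    (hp : p.length = G.dist u w) (hx : x ∈ p.support) :
    (p.takeUntil x hx).length = G.dist u x ∧ (p.dropUntil x hx).length = G.dist x w := by
  have h1 : G.dist u x ≤ (p.takeUntil x hx).length := SimpleGraph.dist_le _
  have h2 : G.dist x w ≤ (p.dropUntil x hx).length := SimpleGraph.dist_le _
  have h3 : (p.takeUntil x hx).length + (p.dropUntil x hx).length = p.length := by
    rw [← Walk.length_append, Walk.take_spec]
  obtain ⟨q, hq⟩ := (p.takeUntil x hx).reachable.exists_walk_length_eq_dist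
  obtain ⟨r, hr⟩ := (p.dropUntil x hx).reachable.exists_walk_length_eq_dist
  have h4 : G.dist u w ≤ G.dist u x + G.dist x w := by
    have := SimpleGraph.dist_le (q.append r)
    rwa [Walk.length_append, hq, hr] at this
  omega

/-- Each vertex of a shortest walk sits at position `dist u x`. -/
lemma aux_getVert_dist {G : SimpleGraph V} [DecidableEq V] {u w x : V} (p : G.Walk u w)
    (hp : p.length = G.dist u w) (hx : x ∈ p.support) :
    p.getVert (G.dist u x) = x := by
  have h := (aux_takeUntil_dist p hp hx).1
  conv_lhs => rw [← Walk.take_spec p hx]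
  rw [Walk.getVert_append]
  simp [h]

/-- Two adjacent vertices on a shortest walk are joined by an edge of the walk. -/
lemma aux_chord_mem_edges {G : SimpleGraph V} [DecidableEq V] {u w x y : V} (p : G.Walk u w)
    (hp : p.length = G.dist u w) (hadj : G.Adj x y) (hx : x ∈ p.support) (hy : y ∈ p.support) :
    s(x, y) ∈ p.edges := by
  set i := G.dist u x with hi
  set j := G.dist u y with hj
  have hgx : p.getVert i = x := aux_getVert_dist p hp hx
  have hgy : p.getVert j = y := aux_getVert_dist p hp hy
  have hij : i ≠ j := by
    intro h
    apply hadj.ne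
    rw [← hgx, ← hgy, h]
  have hile : i ≤ p.length := by
    have := (aux_takeUntil_dist p hp hx).1
    rw [hi, ← this]; exact Walk.length_takeUntil_le p hx
  have hjle : j ≤ p.length := by
    have := (aux_takeUntil_dist p hp hy).1
    rw [hj, ← this]; exact Walk.length_takeUntil_le p hy
  have hjlei : j ≤ i + 1 := by
    have : G.dist u y ≤ (( p.takeUntil x hx).append (Walk.cons hadj Walk.nil)).length :=
      SimpleGraph.dist_le _
    rw [Walk.length_append, (aux_takeUntil_dist p hp hx).1] at this
    simpa using this
  have hilej : i ≤ j + 1 := by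
    have : G.dist u x ≤ ((p.takeUntil y hy).append (Walk.cons hadj.symm Walk.nil)).length :=
      SimpleGraph.dist_le _
    rw [Walk.length_append, (aux_takeUntil_dist p hp hy).1] at this
    simpa using this
  rcases (by omega : j = i + 1 ∨ i = j + 1) with h | h
  · have hlt : i < p.length := by omega
    have := p.toSubgraph_adj_getVert hlt
    rw [hgx, ← h, hgy] at this
    rw [← Walk.mem_edges_toSubgraph]
    exact this
  · have hlt : j < p.length := by omega
    have := p.toSubgraph_adj_getVert hlt
    rw [hgy, ← h, hgx] at this
    rw [Sym2.eq_swap, ← Walk.mem_edges_toSubgraph]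
    exact this

lemma aux_reachable_induce {G : SimpleGraph V} {s : Set V} :
    ∀ {a b : V} (p : G.Walk a b), (∀ x ∈ p.support, x ∈ s) →
      ∀ (ha : a ∈ s) (hb : b ∈ s), (G.induce s).Reachable ⟨a, ha⟩ ⟨b, hb⟩ := by
  intro a b p
  induction p with
  | nil => exact fun _ ha hb => Reachable.refl _
  | @cons a c b h q ih =>
    intro hsup ha hb
    have hc : c ∈ s := hsup c (by simp)
    have hadj : (G.induce s).Adj ⟨a, ha⟩ ⟨c, hc⟩ := h
    exact hadj.reachable.trans (ih (fun x hx => hsup x (by simp [hx])) hc hb)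

lemma aux_avoid {W : Type} {H : SimpleGraph W} {u w : W}
    (hreach : ∀ a b : W, H.Reachable a b)
    (hmax : ∀ a b : W, H.dist a b ≤ H.dist u w) :
    ∀ x : W, x ≠ u → ∃ q : H.Walk x w, u ∉ q.support := by
  classical
  intro x hx
  obtain ⟨q, hq⟩ := (hreach x w).exists_walk_length_eq_dist
  by_cases hu : u ∈ q.support
  · exfalso
    have h1 := (aux_takeUntil_dist q hq hu).1
    have h2 := (aux_takeUntil_dist q hq hu).2
    have h3 : (q.takeUntil u hu).length + (q.dropUntil u hu).length = q.length := by
      rw [← Walk.length_append, Walk.take_spec]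
    have h4 : H.dist x w ≤ H.dist u w := hmax x w
    have h5 : H.dist x u = 0 := by omega
    exact hx ((hreach x u).dist_eq_zero_iff.mp h5)
  · exact ⟨q, hu⟩


/-- The key chordal lemma: if `S` is a clique, `A` is a connected set disjoint from `S`,
and every vertex of `S` has a neighbor in `A`, then some vertex of `A` is adjacent
to all of `S`. -/
lemma aux_key [Fintype V] {G : SimpleGraph V} (hch : IsChordal G)
    {S : Set V} (hS : G.IsClique S) :
    ∀ (n : ℕ) (A : Set V), A.ncard ≤ n → A.Nonempty → (∀ a ∈ A, a ∉ S) →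
      (∀ a ∈ A, ∀ b ∈ A, ∃ p : G.Walk a b, ∀ x ∈ p.support, x ∈ A) →
      (∀ s ∈ S, ∃ a ∈ A, G.Adj a s) →
      ∃ v ∈ A, ∀ s ∈ S, G.Adj v s := by
  classical
  intro n
  induction n with
  | zero =>
    intro A hcard hne _ _ _
    have := (Set.ncard_pos A.toFinite).mpr hne
    omega
  | succ n ih =>
    intro A hcard hne hdisj hconn hcov
    by_cases hsing : ∀ a ∈ A, ∀ b ∈ A, a = b
    · obtain ⟨a0, ha0⟩ := hne
      refine ⟨a0, ha0, fun s hs => ?_⟩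
      obtain ⟨a, haA, hadj⟩ := hcov s hs
      rwa [hsing a haA a0 ha0] at hadj
    · push_neg at hsing
      obtain ⟨a0, ha0, b0, hb0, hab0⟩ := hsing
      set H := G.induce A with hHdef
      haveI : Nonempty ↥A := ⟨⟨a0, ha0⟩⟩
      have hreach : ∀ a b : ↥A, H.Reachable a b := by
        rintro ⟨a, ha⟩ ⟨b, hb⟩
        obtain ⟨p, hp⟩ := hconn a ha b hb
        exact aux_reachable_induce p hp ha hb
      obtain ⟨⟨u, w⟩, hmax'⟩ := Finite.exists_max (fun q : ↥A × ↥A => H.dist q.1 q.2)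
      have hmax : ∀ a b : ↥A, H.dist a b ≤ H.dist u w := fun a b => hmax' (a, b)
      have huw : u ≠ w := by
        intro h
        have hab : (⟨a0, ha0⟩ : ↥A) ≠ ⟨b0, hb0⟩ := fun hh => hab0 (congrArg Subtype.val hh)
        have h1 : 0 < H.dist ⟨a0, ha0⟩ ⟨b0, hb0⟩ := (hreach _ _).pos_dist_of_ne hab
        have h2 := hmax ⟨a0, ha0⟩ ⟨b0, hb0⟩
        rw [h, SimpleGraph.dist_self] at h2
        omega
      have hremu : ∀ x : ↥A, x ≠ u → ∃ q : H.Walk x w, u ∉ q.support :=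
        aux_avoid hreach hmax
      have hremw : ∀ x : ↥A, x ≠ w → ∃ q : H.Walk x u, w ∉ q.support :=
        aux_avoid hreach (fun a b => le_trans (hmax a b) (le_of_eq (SimpleGraph.dist_comm ..)))
      -- the vertex-inclusion homomorphism
      let f : H →g G := ⟨Subtype.val, fun h => h⟩
      have hcard' : ∀ z : ↥A, (A \ {z.val}).ncard ≤ n := by
        intro z
        have := Set.ncard_diff_singleton_of_mem z.prop
        have hpos := (Set.ncard_pos A.toFinite).mpr hne
        omega
      have hconn' : ∀ (z t : ↥A), (∀ x : ↥A, x ≠ z → ∃ q : H.Walk x t, z ∉ q.support) →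
          ∀ a ∈ A \ {z.val}, ∀ b ∈ A \ {z.val},
            ∃ p : G.Walk a b, ∀ x ∈ p.support, x ∈ A \ {z.val} := by
        rintro z t hrem a ⟨haA, ha⟩ b ⟨hbA, hb⟩
        obtain ⟨q1, hq1⟩ := hrem ⟨a, haA⟩ (fun hh => ha (by simp [← congrArg Subtype.val hh]))
        obtain ⟨q2, hq2⟩ := hrem ⟨b, hbA⟩ (fun hh => hb (by simp [← congrArg Subtype.val hh]))
        refine ⟨(q1.append q2.reverse).map f, ?_⟩
        intro x hx
        rw [Walk.support_map] at hx
        obtain ⟨x', hx', rfl⟩ := List.mem_map.mp hx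
        refine ⟨x'.prop, ?_⟩
        have hxz : x' ≠ z := by
          rw [Walk.mem_support_append_iff] at hx'
          rcases hx' with h | h
          · exact fun hh => hq1 (hh ▸ h)
          · rw [Walk.support_reverse, List.mem_reverse] at h
            exact fun hh => hq2 (hh ▸ h)
        simp only [Set.mem_singleton_iff]
        exact fun hh => hxz (Subtype.ext hh)
      by_cases hcovu : ∀ s ∈ S, ∃ a ∈ A \ {u.val}, G.Adj a s
      · have hnew : (A \ {u.val}).Nonempty :=
          ⟨w.val, w.prop, fun hh => huw (Subtype.ext hh).symm⟩
        obtain ⟨v, hv, hvs⟩ := ih (A \ {u.val}) (hcard' u) hnew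
          (fun a ha => hdisj a ha.1) (hconn' u w hremu) hcovu
        exact ⟨v, hv.1, hvs⟩
      · by_cases hcovw : ∀ s ∈ S, ∃ a ∈ A \ {w.val}, G.Adj a s
        · have hnew : (A \ {w.val}).Nonempty :=
            ⟨u.val, u.prop, fun hh => huw (Subtype.ext hh)⟩
          obtain ⟨v, hv, hvs⟩ := ih (A \ {w.val}) (hcard' w) hnew
            (fun a ha => hdisj a ha.1) (hconn' w u hremw) hcovw
          exact ⟨v, hv.1, hvs⟩
        · exfalso
          push_neg at hcovu hcovw
          obtain ⟨su, hsuS, hsu⟩ := hcovu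
          obtain ⟨sw, hswS, hsw⟩ := hcovw
          have huniq_u : ∀ a ∈ A, G.Adj a su → a = u.val := by
            intro a haA hadj
            by_contra hne'
            exact hsu a ⟨haA, by simpa using hne'⟩ hadj
          have huniq_w : ∀ a ∈ A, G.Adj a sw → a = w.val := by
            intro a haA hadj
            by_contra hne'
            exact hsw a ⟨haA, by simpa using hne'⟩ hadj
          have hadj_u : G.Adj u.val su := by
            obtain ⟨a, haA, hadj⟩ := hcov su hsuS
            rwa [huniq_u a haA hadj] at hadj
          have hadj_w : G.Adj w.val sw := by
            obtain ⟨a, haA, hadj⟩ := hcov sw hswS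
            rwa [huniq_w a haA hadj] at hadj
          have hne_s : su ≠ sw := by
            intro hh
            apply huw
            apply Subtype.ext
            exact huniq_w u.val u.prop (hh ▸ hadj_u)
          have hadj_ss : G.Adj su sw := hS hsuS hswS hne_s
          have hsuA : su ∉ A := fun h => hdisj su h hsuS
          have hswA : sw ∉ A := fun h => hdisj sw h hswS
          -- shortest path from u to w inside A
          obtain ⟨P, hP⟩ := (hreach u w).exists_walk_length_eq_dist
          have hPpos : 1 ≤ P.length := by
            have := (hreach u w).pos_dist_of_ne huw
            omega
          have hPpath : P.IsPath := Walk.isPath_of_length_eq_dist P hP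
          set p := P.map f with hpdef
          have hppath : p.IsPath := Walk.map_isPath_of_injective Subtype.val_injective hPpath
          have hplen : p.length = P.length := by rw [hpdef]; exact Walk.length_map f P
          have hsup_p : ∀ x ∈ p.support, x ∈ A := by
            intro x hx
            rw [hpdef, Walk.support_map] at hx
            obtain ⟨x', _, rfl⟩ := List.mem_map.mp hx
            exact x'.prop
          have hsup_p' : ∀ x ∈ p.support, ∃ x' : ↥A, x' ∈ P.support ∧ x'.val = x := by
            intro x hx
            rw [hpdef, Walk.support_map] at hx
            obtain ⟨x', hx', rfl⟩ := List.mem_map.mp hx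
            exact ⟨x', hx', rfl⟩
          have hchord : ∀ x y, G.Adj x y → x ∈ p.support → y ∈ p.support →
              s(x, y) ∈ p.edges := by
            intro x y hadj hx hy
            obtain ⟨x', hx', rfl⟩ := hsup_p' x hx
            obtain ⟨y', hy', rfl⟩ := hsup_p' y hy
            have hadj' : H.Adj x' y' := hadj
            have := aux_chord_mem_edges P hP hadj' hx' hy'
            rw [hpdef, Walk.edges_map]
            exact List.mem_map_of_mem this
          have hsuP : su ∉ p.support := fun h => hsuA (hsup_p su h)
          have hswP : sw ∉ p.support := fun h => hswA (hsup_p sw h)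
          -- the cycle
          set q2 : G.Walk w.val su := Walk.cons hadj_w (Walk.cons hadj_ss.symm Walk.nil)
            with hq2def
          set c : G.Walk su su := Walk.cons hadj_u.symm (p.append q2) with hcdef
          have hcsup : c.support = su :: (p.support ++ [sw, su]) := by
            simp [hcdef, hq2def, Walk.support_append, f]
          have hcedges : c.edges = s(su, u.val) :: (p.edges ++ [s(w.val, sw), s(sw, su)]) := by
            simp [hcdef, hq2def, Walk.edges_append, f]
            exact Or.inl rfl
          have hclen : c.length = p.length + 3 := by
            simp [hcdef, hq2def, Walk.length_append]
          have huvalA : u.val ∈ A := u.prop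
          have hwvalA : w.val ∈ A := w.prop
          have hne1 : su ≠ u.val := fun h => hsuA (h ▸ huvalA)
          have hne2 : su ≠ w.val := fun h => hsuA (h ▸ hwvalA)
          have hne3 : sw ≠ u.val := fun h => hswA (h ▸ huvalA)
          have hne4 : sw ≠ w.val := fun h => hswA (h ▸ hwvalA)
          have hcyc : c.IsCycle := by
            refine ⟨⟨⟨?_⟩, by simp [hcdef]⟩, ?_⟩
            · rw [hcedges]
              refine List.nodup_cons.mpr ⟨?_, ?_⟩
              · intro hmem
                rw [List.mem_append] at hmem
                rcases hmem with h | h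
                · exact hsuP (Walk.fst_mem_support_of_mem_edges p h)
                · simp only [List.mem_cons, List.mem_singleton, List.not_mem_nil, or_false]
                    at h
                  rcases h with h | h
                  · rw [Sym2.eq_iff] at h
                    rcases h with ⟨h1, _⟩ | ⟨h1, _⟩
                    · exact hne2 h1
                    · exact hne_s h1
                  · rw [Sym2.eq_iff] at h
                    rcases h with ⟨h1, _⟩ | ⟨_, h2⟩
                    · exact hne_s h1
                    · exact hne3 h2.symm
              · refine List.Nodup.append hppath.edges_nodup ?_ ?_
                · refine List.nodup_cons.mpr ⟨?_, List.nodup_singleton _⟩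
                  simp only [List.mem_singleton]
                  intro h
                  rw [Sym2.eq_iff] at h
                  rcases h with ⟨h1, _⟩ | ⟨h1, _⟩
                  · exact hne4 h1.symm
                  · exact hne2 h1.symm
                · intro e he he'
                  simp only [List.mem_cons, List.mem_singleton, List.not_mem_nil, or_false]
                    at he'
                  rcases he' with rfl | rfl
                  · exact hswP (Walk.snd_mem_support_of_mem_edges p he)
                  · exact hswP (Walk.fst_mem_support_of_mem_edges p he)
            · rw [hcsup]
              simp only [List.tail_cons]
              refine List.Nodup.append hppath.support_nodup ?_ ?_
              · simp [hne_s.symm]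
              · intro x hx hx'
                simp only [List.mem_cons, List.mem_singleton, List.not_mem_nil, or_false]
                  at hx'
                rcases hx' with rfl | rfl
                · exact hswP hx
                · exact hsuP hx
          obtain ⟨x, y, hxy, hxs, hys, hnadj⟩ := hch su c hcyc (by omega)
          apply hnadj
          rw [← Subgraph.mem_edgeSet, Walk.mem_edges_toSubgraph, hcedges]
          have hmemx : x = su ∨ x ∈ p.support ∨ x = sw := by
            rw [hcsup] at hxs
            simp only [List.mem_cons, List.mem_append, List.mem_singleton,
              List.not_mem_nil, or_false] at hxs
            tauto
          have hmemy : y = su ∨ y ∈ p.support ∨ y = sw := by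
            rw [hcsup] at hys
            simp only [List.mem_cons, List.mem_append, List.mem_singleton,
              List.not_mem_nil, or_false] at hys
            tauto
          rcases hmemx with rfl | hx | rfl <;> rcases hmemy with rfl | hy | rfl
          · exact absurd rfl hxy.ne
          · have : y = u.val := huniq_u y (hsup_p y hy) hxy.symm
            subst this
            simp
          · simp [Sym2.eq_swap]
          · have : x = u.val := huniq_u x (hsup_p x hx) hxy
            subst this
            simp [Sym2.eq_swap]
          · simp only [List.mem_cons]
            right
            rw [List.mem_append]
            exact Or.inl (hchord x y hxy hx hy)
          · have : x = w.val := huniq_w x (hsup_p x hx) hxy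
            subst this
            simp
          · simp
          · have : y = w.val := huniq_w y (hsup_p y hy) hxy.symm
            subst this
            simp [Sym2.eq_swap]
          · exact absurd rfl hxy.ne

lemma aux_exists_maximal_clique [Fintype V] (G : SimpleGraph V) {K : Set V}
    (hK : G.IsClique K) :
    ∃ C : Set V, G.IsClique C ∧ (∀ D : Set V, G.IsClique D → C ⊆ D → C = D) ∧ K ⊆ C := by
  classical
  obtain ⟨C, hC, hmax⟩ := Set.Finite.exists_maximalFor Set.ncard
    {D : Set V | G.IsClique D ∧ K ⊆ D} (Set.toFinite _) ⟨K, hK, subset_rfl⟩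
  refine ⟨C, hC.1, ?_, hC.2⟩
  intro D hD hCD
  have hDmem : D ∈ {D : Set V | G.IsClique D ∧ K ⊆ D} := ⟨hD, hC.2.trans hCD⟩
  have h1 : C.ncard ≤ D.ncard := Set.ncard_le_ncard hCD (Set.toFinite _)
  have h2 := hmax hDmem h1
  exact Set.eq_of_subset_of_ncard_le hCD h2.ge (Set.toFinite _)


end AuxStmt10

/-- Every connected chordal graph contains a maximal clique that is a
balanced separator. -/
theorem stmt10 {V : Type} [Fintype V] (G : SimpleGraph V) (hG : G.Connected)
    (hch : IsChordal G) :
    ∃ C : Set V, G.IsClique C ∧ (∀ D : Set V, G.IsClique D → C ⊆ D → C = D) ∧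
      IsBalancedSeparator G C := by
  classical
  set n := Fintype.card V with hn
  let msize : Set V → ℕ := fun S =>
    sSup (Set.range fun D : (G.induce Sᶜ).ConnectedComponent => Nat.card D.supp)
  have hcard_le : ∀ (S : Set V) (D : (G.induce Sᶜ).ConnectedComponent),
      Nat.card D.supp ≤ n := by
    intro S D
    have h1 : Nat.card D.supp ≤ Nat.card V :=
      Nat.card_le_card_of_injective (fun x : D.supp => (x.val.val : V))
        (fun a b hab => Subtype.ext (Subtype.ext hab))
    exact h1.trans_eq Nat.card_eq_fintype_card
  have hbdd : ∀ S : Set V,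
      BddAbove (Set.range fun D : (G.induce Sᶜ).ConnectedComponent => Nat.card D.supp) := by
    intro S
    refine ⟨n, ?_⟩
    rintro x ⟨D, rfl⟩
    exact hcard_le S D
  have hA_le_msize : ∀ (S : Set V) (D : (G.induce Sᶜ).ConnectedComponent),
      Nat.card D.supp ≤ msize S := fun S D => le_csSup (hbdd S) ⟨D, rfl⟩
  have hmsize_lt : ∀ (S : Set V) (m : ℕ), 0 < m →
      (∀ D : (G.induce Sᶜ).ConnectedComponent, Nat.card D.supp < m) → msize S < m := by
    intro S m hm hD
    rcases isEmpty_or_nonempty ((G.induce Sᶜ).ConnectedComponent) with he | hne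
    · have : (Set.range fun D : (G.induce Sᶜ).ConnectedComponent => Nat.card D.supp) = ∅ :=
        Set.range_eq_empty _
      simp only [msize, this, csSup_empty]
      exact hm
    · have hmem := Nat.sSup_mem (Set.range_nonempty _) (hbdd S)
      obtain ⟨D, hD'⟩ := hmem
      calc msize S = Nat.card D.supp := hD'.symm
        _ < m := hD D
  -- the set of maximal cliques
  set M : Set (Set V) := {C | G.IsClique C ∧ ∀ D : Set V, G.IsClique D → C ⊆ D → C = D}
    with hM
  have hMne : M.Nonempty := by
    obtain ⟨C, h1, h2, _⟩ := aux_exists_maximal_clique G (Set.pairwise_empty _)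
    exact ⟨C, h1, h2⟩
  obtain ⟨C, hCM, hCk⟩ : ∃ C ∈ M, msize C = sInf (msize '' M) :=
    Nat.sInf_mem (hMne.image msize)
  refine ⟨C, hCM.1, hCM.2, ?_⟩
  by_contra hbal
  rw [IsBalancedSeparator] at hbal
  push_neg at hbal
  obtain ⟨D0, hD0⟩ := hbal
  rw [← hn] at hD0
  -- the big component
  set A : Set V := Subtype.val '' D0.supp with hA
  have hAcard : A.ncard = Nat.card D0.supp := by
    rw [hA, Set.ncard_image_of_injective _ Subtype.val_injective, Nat.card_coe_set_eq]
  have hAbig : n < 2 * A.ncard := by omega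
  have hAne : A.Nonempty := Set.nonempty_of_ncard_ne_zero (by omega)
  have hAnotC : ∀ a ∈ A, a ∉ C := by
    rintro a ⟨a', ha', rfl⟩
    exact a'.prop
  let f : G.induce Cᶜ →g G := ⟨Subtype.val, fun h => h⟩
  have hclosure : ∀ a ∈ A, ∀ b, G.Adj a b → b ∉ C → b ∈ A := by
    rintro a ⟨a', ha', rfl⟩ b hadj hbC
    have hb : b ∈ (Cᶜ : Set V) := hbC
    have hadj' : (G.induce Cᶜ).Adj a' ⟨b, hb⟩ := hadj
    have h1 : (G.induce Cᶜ).connectedComponentMk ⟨b, hb⟩ = D0 := by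
      rw [← (ConnectedComponent.mem_supp_iff _ _).mp ha']
      exact ConnectedComponent.sound hadj'.symm.reachable
    exact ⟨⟨b, hb⟩, (ConnectedComponent.mem_supp_iff _ _).mpr h1, rfl⟩
  have hsupp_mem : ∀ (x y : ↥(Cᶜ)) (W : (G.induce Cᶜ).Walk x y) (z : ↥(Cᶜ)),
      z ∈ W.support →
      (G.induce Cᶜ).connectedComponentMk z = (G.induce Cᶜ).connectedComponentMk x :=
    fun x y W z hz => (ConnectedComponent.sound (W.takeUntil z hz).reachable).symm
  have hAconn : ∀ a ∈ A, ∀ b ∈ A, ∃ p : G.Walk a b, ∀ x ∈ p.support, x ∈ A := by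
    rintro a ⟨a', ha', rfl⟩ b ⟨b', hb', rfl⟩
    have hreach : (G.induce Cᶜ).Reachable a' b' := by
      apply ConnectedComponent.exact
      rw [(ConnectedComponent.mem_supp_iff _ _).mp ha',
        (ConnectedComponent.mem_supp_iff _ _).mp hb']
    obtain ⟨W⟩ := hreach
    refine ⟨W.map f, ?_⟩
    intro x hx
    rw [Walk.support_map] at hx
    obtain ⟨x', hx', rfl⟩ := List.mem_map.mp hx
    refine ⟨x', ?_, rfl⟩
    rw [ConnectedComponent.mem_supp_iff, hsupp_mem a' b' W x' hx',
      (ConnectedComponent.mem_supp_iff _ _).mp ha']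
  set S : Set V := {c | c ∈ C ∧ ∃ a ∈ A, G.Adj a c} with hSdef
  have hSC : S ⊆ C := fun c hc => hc.1
  have hSclique : G.IsClique S := hCM.1.subset hSC
  obtain ⟨v, hvA, hv⟩ := aux_key hch hSclique A.ncard A le_rfl hAne
    (fun a ha hs => hAnotC a ha hs.1) hAconn (fun s hs => hs.2)
  have hKclique : G.IsClique (insert v S) :=
    hSclique.insert (fun b hb _ => hv b hb)
  obtain ⟨C', hC'cl, hC'max, hKC'⟩ := aux_exists_maximal_clique G hKclique
  have hC'M : C' ∈ M := ⟨hC'cl, hC'max⟩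
  have hmin : msize C ≤ msize C' := by
    rw [hCk]
    exact Nat.sInf_le ⟨C', hC'M, rfl⟩
  have hSsubC' : S ⊆ C' := (Set.subset_insert v S).trans hKC'
  have hvC' : v ∈ C' := hKC' (Set.mem_insert v S)
  have hstep : ∀ a b : ↥(C'ᶜ), (G.induce C'ᶜ).Adj a b → a.val ∈ A → b.val ∈ A := by
    intro a b hadj haA
    by_cases hbC : b.val ∈ C
    · exact absurd (hSsubC' ⟨hbC, a.val, haA, hadj⟩) b.prop
    · exact hclosure a.val haA b.val hadj hbC
  have hwalk : ∀ (a b : ↥(C'ᶜ)) (W : (G.induce C'ᶜ).Walk a b), a.val ∈ A → b.val ∈ A := by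
    intro a b W
    induction W with
    | nil => exact id
    | cons h q ih => exact fun ha => ih (hstep _ _ h ha)
  have hcompbound : ∀ D : (G.induce C'ᶜ).ConnectedComponent,
      Nat.card D.supp < A.ncard := by
    intro D
    obtain ⟨d, hd⟩ := D.exists_rep
    have hBcard : Nat.card D.supp = (Subtype.val '' D.supp).ncard := by
      rw [Set.ncard_image_of_injective _ Subtype.val_injective, Nat.card_coe_set_eq]
    have hreachd : ∀ x' : ↥(C'ᶜ), x' ∈ D.supp → (G.induce C'ᶜ).Reachable d x' := by
      intro x' hx'
      apply ConnectedComponent.exact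
      rw [(ConnectedComponent.mem_supp_iff _ _).mp hx']
      exact hd
    by_cases hdA : d.val ∈ A
    · have hBsub : Subtype.val '' D.supp ⊆ A \ {v} := by
        rintro x ⟨x', hx', rfl⟩
        obtain ⟨W⟩ := hreachd x' hx'
        refine ⟨hwalk d x' W hdA, ?_⟩
        intro hxv
        simp only [Set.mem_singleton_iff] at hxv
        exact x'.prop (by rw [hxv]; exact hvC')
      have h1 : (Subtype.val '' D.supp).ncard ≤ (A \ {v}).ncard :=
        Set.ncard_le_ncard hBsub (Set.toFinite _)
      have h2 : (A \ {v}).ncard < A.ncard :=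
        Set.ncard_diff_singleton_lt_of_mem hvA (Set.toFinite _)
      omega
    · have hBsub : Subtype.val '' D.supp ⊆ Aᶜ := by
        rintro x ⟨x', hx', rfl⟩ hxA
        obtain ⟨W⟩ := hreachd x' hx'
        exact hdA (hwalk x' d W.reverse hxA)
      have h1 : (Subtype.val '' D.supp).ncard ≤ (Aᶜ).ncard :=
        Set.ncard_le_ncard hBsub (Set.toFinite _)
      have h2 : A.ncard + (Aᶜ).ncard = Nat.card V := Set.ncard_add_ncard_compl A
      rw [Nat.card_eq_fintype_card, ← hn] at h2
      omega
  have h1 : Nat.card D0.supp ≤ msize C := hA_le_msize C D0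
  have h2 : msize C' < A.ncard := hmsize_lt C' A.ncard (by omega) hcompbound
  omega
end

section
/- Let k ≥ 1 and ρ ≥ 0. Every finite connected unweighted graph G = (V,E) with at least k vertices and tb_k(G) ≤ ρ has k vertices v₁,…,v_k such that the union of disks D_ρ(v₁,G) ∪ … ∪ D_ρ(v_k,G) is a balanced separator of G, i.e., every connected component of G[V ∖ (D_ρ(v₁,G) ∪ … ∪ D_ρ(v_k,G))] has at most |V|/2 vertices. -/
open SimpleGraph

section AuxLemmas

variable {V I : Type} {G : SimpleGraph V} {T : SimpleGraph I} {X : I → Set V}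

/-- Transfer a walk in one induced subgraph to another induced subgraph containing
all vertices of the walk's support. -/
lemma aux_walk_transfer {S S' : Set V} {u w : ↥S} (W : (G.induce S).Walk u w) :
    ∀ (_ : ∀ x ∈ W.support, (x : V) ∈ S') (u' w' : ↥S'), (u' : V) = (u : V) → (w' : V) = (w : V) →
      (G.induce S').Reachable u' w' := by
  induction W with
  | nil =>
    intro _ u' w' hu hw
    have : u' = w' := Subtype.ext (hu.trans hw.symm)
    rw [this]
  | @cons a b c hab p ih =>
    intro hsupp u' w' hu hw
    have hbS' : (b : V) ∈ S' := hsupp b (by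
      rw [Walk.support_cons]; exact List.mem_cons_of_mem _ p.start_mem_support)
    have hadj : (G.induce S').Adj u' ⟨(b : V), hbS'⟩ := by
      have hG : G.Adj (a : V) (b : V) := hab
      show G.Adj (u' : V) (b : V)
      rw [hu]; exact hG
    refine hadj.reachable.trans (ih ?_ ⟨(b : V), hbS'⟩ w' rfl hw)
    intro x hx
    exact hsupp x (by rw [Walk.support_cons]; exact List.mem_cons_of_mem _ hx)

lemma aux_exists_walk_avoid (hT : T.Connected)
    (h3 : ∀ i j k : I, ∀ p : T.Walk i k, p.IsPath → j ∈ p.support → X i ∩ X k ⊆ X j)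
    {i a b : I} {v : V} (hva : v ∈ X a) (hvb : v ∈ X b) (hvi : v ∉ X i) :
    ∃ q : T.Walk a b, i ∉ q.support := by
  classical
  obtain ⟨w⟩ := hT.preconnected a b
  refine ⟨w.toPath, fun hi => hvi ?_⟩
  exact h3 a i b w.toPath w.toPath.2 hi ⟨hva, hvb⟩

lemma aux_bags_walk_avoid (hT : T.Connected)
    (h2 : ∀ u v : V, G.Adj u v → ∃ i, u ∈ X i ∧ v ∈ X i)
    (h3 : ∀ i j k : I, ∀ p : T.Walk i k, p.IsPath → j ∈ p.support → X i ∩ X k ⊆ X j)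
    {i : I} {u w : ↥(X i)ᶜ} (W : (G.induce (X i)ᶜ).Walk u w) :
    ∀ (m a : I), (u : V) ∈ X m → (w : V) ∈ X a → ∃ q : T.Walk m a, i ∉ q.support := by
  induction W with
  | @nil x =>
    intro m a hm ha
    exact aux_exists_walk_avoid hT h3 hm ha (x.2 : (x : V) ∈ (X i)ᶜ)
  | @cons x y z hxy p ih =>
    intro m a hm ha
    obtain ⟨b, hb1, hb2⟩ := h2 (x : V) (y : V) hxy
    obtain ⟨q1, hq1⟩ := aux_exists_walk_avoid hT h3 hm hb1 (x.2 : (x : V) ∈ (X i)ᶜ)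
    obtain ⟨q2, hq2⟩ := ih b a hb2 ha
    refine ⟨q1.append q2, ?_⟩
    rw [Walk.mem_support_append_iff]
    rintro (h | h)
    · exact hq1 h
    · exact hq2 h

lemma aux_branch_eq (hT : T.IsTree) {i j j' a b : I} (hij : T.Adj i j) (hij' : T.Adj i j')
    {p₁ : T.Walk j a} (hp₁ : (Walk.cons hij p₁).IsPath)
    {p₂ : T.Walk j' b} (hp₂ : (Walk.cons hij' p₂).IsPath)
    {q : T.Walk a b} (hq : i ∉ q.support) : j = j' := by
  classical
  rw [Walk.cons_isPath_iff] at hp₁ hp₂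
  set W : T.Walk j j' := p₁.append (q.append p₂.reverse) with hW
  have hiW : i ∉ W.support := by
    rw [hW, Walk.mem_support_append_iff]
    rintro (h | h)
    · exact hp₁.2 h
    · rw [Walk.mem_support_append_iff] at h
      rcases h with h | h
      · exact hq h
      · rw [Walk.support_reverse, List.mem_reverse] at h
        exact hp₂.2 h
  have hiB : i ∉ W.bypass.support := fun h => hiW (W.support_bypass_subset h)
  have hnil : (Walk.cons hij' (Walk.nil : T.Walk j' j')).IsPath := by
    rw [Walk.cons_isPath_iff]
    exact ⟨Walk.IsPath.nil, by simpa using hij'.ne⟩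
  have hPeq : (⟨Walk.cons hij W.bypass, W.bypass_isPath.cons hiB⟩ : T.Path i j') =
      (⟨Walk.cons hij' Walk.nil, hnil⟩ : T.Path i j') := hT.IsAcyclic.path_unique _ _
  have := congrArg (fun p : T.Path i j' => (p : T.Walk i j').getVert 1) hPeq
  simpa [Walk.getVert_cons_succ, Walk.getVert_zero] using this

end AuxLemmas

/-- Central lemma: a tree decomposition of a (finite, nonempty) graph has a bag
all components of whose complement are small. -/
lemma aux_main {V I : Type} [Fintype V] {G : SimpleGraph V} {T : SimpleGraph I} {X : I → Set V}
    (hT : T.IsTree) (h1b : ∀ v : V, ∃ i, v ∈ X i)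
    (h2b : ∀ u v : V, G.Adj u v → ∃ i, u ∈ X i ∧ v ∈ X i)
    (h3b : ∀ i j k : I, ∀ p : T.Walk i k, p.IsPath → j ∈ p.support → X i ∩ X k ⊆ X j)
    (hV : Nonempty V) :
    ∃ i, ∀ C : (G.induce (X i)ᶜ).ConnectedComponent,
      2 * Nat.card C.supp ≤ Fintype.card V := by
  classical
  by_contra hcon
  push_neg at hcon
  choose CC hCC using hcon
  set sC : I → Set V := fun i => Subtype.val '' (CC i).supp with hsC
  have hsub : ∀ i, sC i ⊆ (X i)ᶜ := by
    rintro i u ⟨x, _, rfl⟩; exact x.2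
  have hcard : ∀ i, Fintype.card V < 2 * (sC i).ncard := by
    intro i
    have he : (sC i).ncard = Nat.card (CC i).supp := by
      rw [hsC]
      simp only []
      rw [Set.ncard_image_of_injective _ Subtype.val_injective, ← Nat.card_coe_set_eq]
    rw [he]; exact hCC i
  have hne : ∀ i, (sC i).Nonempty := by
    intro i
    rw [Set.nonempty_iff_ne_empty]
    intro hemp
    have h1 := hcard i
    rw [hemp, Set.ncard_empty] at h1
    have h2 : 1 ≤ Fintype.card V := Fintype.card_pos_iff.mpr hV
    omega
  have hinter : ∀ i j, (sC i ∩ sC j).Nonempty := by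
    intro i j
    rw [Set.nonempty_iff_ne_empty]
    intro hemp
    have hdisj : Disjoint (sC i) (sC j) := Set.disjoint_iff_inter_eq_empty.mpr hemp
    have e1 := Set.ncard_union_eq hdisj (Set.toFinite _) (Set.toFinite _)
    have e2 : (sC i ∪ sC j).ncard ≤ Fintype.card V := by
      have := Set.ncard_le_ncard (Set.subset_univ (sC i ∪ sC j)) (Set.toFinite _)
      rwa [Set.ncard_univ, Nat.card_eq_fintype_card] at this
    have := hcard i; have := hcard j; omega
  have hmemC : ∀ (i : I) (u : V) (hu : u ∈ (X i)ᶜ),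
      u ∈ sC i ↔ (G.induce (X i)ᶜ).connectedComponentMk ⟨u, hu⟩ = CC i := by
    intro i u hu
    constructor
    · rintro ⟨x, hx, hxu⟩
      have hxe : x = ⟨u, hu⟩ := Subtype.ext hxu
      rw [← hxe]
      exact (ConnectedComponent.mem_supp_iff _ _).mp hx
    · intro hmk
      exact ⟨⟨u, hu⟩, (ConnectedComponent.mem_supp_iff _ _).mpr hmk, rfl⟩
  have hreach : ∀ (i : I) (u w : V), u ∈ sC i → w ∈ sC i →
      ∃ (hu' : u ∈ (X i)ᶜ) (hw' : w ∈ (X i)ᶜ), (G.induce (X i)ᶜ).Reachable ⟨u, hu'⟩ ⟨w, hw'⟩ := by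
    intro i u w hu hw
    have hu' := hsub i hu
    have hw' := hsub i hw
    refine ⟨hu', hw', ?_⟩
    have e1 := (hmemC i u hu').mp hu
    have e2 := (hmemC i w hw').mp hw
    exact ConnectedComponent.exact (e1.trans e2.symm)
  have hclaim : ∀ (i m a : I), (X m ∩ sC i).Nonempty → (X a ∩ sC i).Nonempty →
      ∃ q : T.Walk m a, i ∉ q.support := by
    intro i m a hma haa
    obtain ⟨u, hum, hui⟩ := hma
    obtain ⟨w, hwm, hwi⟩ := haa
    obtain ⟨hu', hw', hr⟩ := hreach i u w hui hwi
    obtain ⟨W⟩ := hr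
    exact aux_bags_walk_avoid hT.isConnected h2b h3b W m a hum hwm
  obtain ⟨v₁⟩ := hV
  obtain ⟨iwit, _⟩ := h1b v₁
  have hSne : (Set.range fun i => (sC i).ncard).Nonempty := ⟨_, ⟨iwit, rfl⟩⟩
  obtain ⟨i₀, hi₀⟩ := Nat.sInf_mem hSne
  have hmin : ∀ i, (sC i₀).ncard ≤ (sC i).ncard := by
    intro i
    exact le_of_eq_of_le hi₀ (Nat.sInf_le ⟨i, rfl⟩)
  obtain ⟨u₀, hu₀⟩ := hne i₀
  obtain ⟨m, hm⟩ := h1b u₀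
  have key : ∀ (r : ℕ) (i : I) (p : T.Walk i m), p.IsPath → p.length = r → sC i = sC i₀ → False := by
    intro r
    induction r using Nat.strong_induction_on with
    | _ r IH =>
      intro i p hp hlen hCeq
      have humC : u₀ ∈ sC i := hCeq ▸ hu₀
      cases p with
      | nil => exact (hsub _ humC) hm
      | @cons _ j _ hij p₁ =>
        have hp' := hp
        rw [Walk.cons_isPath_iff] at hp
        obtain ⟨u₁, hu₁⟩ := hne j
        obtain ⟨m', hm'⟩ := h1b u₁
        have hm'ne : j ≠ m' := fun hjm => (hsub j hu₁) (hjm ▸ hm')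
        obtain ⟨w'⟩ := hT.isConnected.preconnected j m'
        obtain ⟨q', hq'⟩ : ∃ q : T.Walk j m', q.IsPath := ⟨w'.toPath, w'.toPath.2⟩
        cases q' with
        | nil => exact hm'ne rfl
        | @cons _ j₂ _ hjj₂ p₂ =>
          by_cases hcase : j₂ = i
          · subst hcase
            obtain ⟨w, hwi, hwj⟩ := hinter j₂ j
            obtain ⟨a, ha⟩ := h1b w
            obtain ⟨qa, hqa⟩ := hclaim j m' a ⟨u₁, hm', hu₁⟩ ⟨w, ha, hwj⟩
            have hane_j : j ≠ a := fun hja => (hsub j hwj) (hja ▸ ha)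
            obtain ⟨w₂⟩ := hT.isConnected.preconnected j a
            obtain ⟨q₂, hq₂⟩ : ∃ q : T.Walk j a, q.IsPath := ⟨w₂.toPath, w₂.toPath.2⟩
            cases q₂ with
            | nil => exact hane_j rfl
            | @cons _ y _ hjy r₂ =>
              have hyi : y = j₂ := by
                refine aux_branch_eq hT hjy hjj₂ hq₂ hq' (q := qa.reverse) ?_
                rw [Walk.support_reverse, List.mem_reverse]
                exact hqa
              subst hyi
              obtain ⟨qb, hqb⟩ := hclaim y m a ⟨u₀, hm, humC⟩ ⟨w, ha, hwi⟩
              have hane_i : y ≠ a := fun hia => (hsub y hwi) (hia ▸ ha)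
              obtain ⟨w₃⟩ := hT.isConnected.preconnected y a
              obtain ⟨q₃, hq₃⟩ : ∃ q : T.Walk y a, q.IsPath := ⟨w₃.toPath, w₃.toPath.2⟩
              cases q₃ with
              | nil => exact hane_i rfl
              | @cons _ z _ hiz r₃ =>
                have hzj : z = j := by
                  refine aux_branch_eq hT hiz hij hq₃ hp' (q := qb.reverse) ?_
                  rw [Walk.support_reverse, List.mem_reverse]
                  exact hqb
                subst hzj
                rw [Walk.cons_isPath_iff] at hq₃
                have hPeq : (⟨r₃, hq₃.1⟩ : T.Path z a) = ⟨Walk.cons hjy r₂, hq₂⟩ :=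
                  hT.IsAcyclic.path_unique _ _
                have hweq : r₃ = Walk.cons hjy r₂ := congrArg Subtype.val hPeq
                apply hq₃.2
                rw [hweq, Walk.support_cons]
                exact List.mem_cons_of_mem _ r₂.start_mem_support
          · have hdis : ∀ w' ∈ sC j, w' ∉ X i := by
              intro w' hw' hwXi
              obtain ⟨q, hq⟩ := hclaim j m' i ⟨u₁, hm', hu₁⟩ ⟨w', hwXi, hw'⟩
              have hnilp : (Walk.cons hij.symm (Walk.nil : T.Walk i i)).IsPath := by
                rw [Walk.cons_isPath_iff]
                exact ⟨Walk.IsPath.nil, by simp [hij.ne']⟩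
              exact hcase (aux_branch_eq hT hjj₂ hij.symm hq' hnilp (q := q) hq)
            have hsubj : sC j ⊆ sC i := by
              obtain ⟨w₁, hw₁i, hw₁j⟩ := hinter i j
              intro x hx
              obtain ⟨hx', hw₁', hr⟩ := hreach j x w₁ hx hw₁j
              obtain ⟨W⟩ := hr
              have hsupp : ∀ y ∈ W.support, (y : V) ∈ (X i)ᶜ := by
                intro y hy
                have hyj : (y : V) ∈ sC j := by
                  have hyr : (G.induce (X j)ᶜ).Reachable ⟨x, hx'⟩ y := ⟨W.takeUntil y hy⟩
                  have e1 := (hmemC j x hx').mp hx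
                  rw [hmemC j (y : V) y.2]
                  exact (ConnectedComponent.sound hyr.symm).trans e1
                exact fun hyXi => hdis (y : V) hyj hyXi
              have hxXi : x ∈ (X i)ᶜ := fun hxi => hdis x hx hxi
              have hw₁Xi : w₁ ∈ (X i)ᶜ := hsub i hw₁i
              have hr' := aux_walk_transfer W hsupp ⟨x, hxXi⟩ ⟨w₁, hw₁Xi⟩ rfl rfl
              rw [hmemC i x hxXi]
              have hw₁m := (hmemC i w₁ hw₁Xi).mp hw₁i
              exact (ConnectedComponent.sound hr').trans hw₁m
            have hCeq' : sC j = sC i := by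
              refine Set.eq_of_subset_of_ncard_le hsubj ?_ (Set.toFinite _)
              rw [hCeq]
              exact hmin j
            have hlt : p₁.length < r := by
              rw [← hlen, Walk.length_cons]
              omega
            exact IH p₁.length hlt j p₁ hp.1 rfl (hCeq'.trans hCeq)
  obtain ⟨w₄⟩ := hT.isConnected.preconnected i₀ m
  exact key (w₄.toPath : T.Walk i₀ m).length i₀ w₄.toPath w₄.toPath.2 rfl rfl

/-- Every connected graph with at least `k` vertices and `tb_k(G) ≤ ρ`
has `k` vertices whose union of radius-`ρ` disks is a balanced separator. -/
theorem stmt11 {V : Type} [Fintype V] (G : SimpleGraph V) (hG : G.Connected)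
    (k ρ : ℕ) (hk : 1 ≤ k) (hn : k ≤ Fintype.card V) (h : kTreeBreadth k G ≤ ρ) :
    ∃ s : Finset V, s.card = k ∧ IsBalancedSeparator G (⋃ v ∈ s, disk G v ρ) := by
  classical
  have hn1 : 1 ≤ Fintype.card V := le_trans hk hn
  have hVne : Nonempty V := Fintype.card_pos_iff.mp hn1
  obtain ⟨v₀⟩ := hVne
  have hAne : { r : ℕ | ∃ (I : Type) (T : SimpleGraph I) (X : I → Set V),
      IsTreeDecomp G T X ∧ ∀ i, ∃ s : Finset V, s.card ≤ k ∧
        X i ⊆ ⋃ v ∈ s, disk G v r }.Nonempty := by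
    refine ⟨Fintype.card V, Unit, ⊥, fun _ => Set.univ, ⟨⟨?_, ?_⟩, fun v => ⟨(), trivial⟩,
      fun u v _ => ⟨(), trivial, trivial⟩, fun _ _ _ _ _ _ _ _ => trivial⟩, ?_⟩
    · constructor
      intro a b; cases a; cases b; exact Reachable.refl _
    · exact isAcyclic_bot
    · intro i
      refine ⟨{v₀}, by simpa using hk, fun u _ => ?_⟩
      simp only [Set.mem_iUnion, Finset.mem_singleton]
      refine ⟨v₀, rfl, ?_⟩
      show G.dist u v₀ ≤ Fintype.card V
      obtain ⟨w⟩ := hG.preconnected u v₀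
      exact le_trans (SimpleGraph.dist_le (w.toPath : G.Walk u v₀))
        (le_of_lt (Walk.IsPath.length_lt w.toPath.2))
  have hρmem : ∃ (I : Type) (T : SimpleGraph I) (X : I → Set V),
      IsTreeDecomp G T X ∧ ∀ i, ∃ s : Finset V, s.card ≤ k ∧
        X i ⊆ ⋃ v ∈ s, disk G v ρ := by
    have h1 := Nat.sInf_mem hAne
    have h2 : sInf { r : ℕ | ∃ (I : Type) (T : SimpleGraph I) (X : I → Set V),
        IsTreeDecomp G T X ∧ ∀ i, ∃ s : Finset V, s.card ≤ k ∧
          X i ⊆ ⋃ v ∈ s, disk G v r } ≤ ρ := h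
    obtain ⟨I, T, X, hdec, hcov⟩ := h1
    refine ⟨I, T, X, hdec, fun i => ?_⟩
    obtain ⟨s, hs, hsub⟩ := hcov i
    refine ⟨s, hs, hsub.trans ?_⟩
    refine Set.iUnion₂_mono fun v hv => ?_
    intro u hu
    exact le_trans hu h2
  obtain ⟨I, T, X, hdec, hcov⟩ := hρmem
  obtain ⟨hT, h1b, h2b, h3b⟩ := hdec
  obtain ⟨i, hbal⟩ := aux_main hT h1b h2b h3b ⟨v₀⟩
  obtain ⟨s₀, hs₀k, hs₀sub⟩ := hcov i
  obtain ⟨s, hs₀s, -, hscard⟩ := Finset.exists_subsuperset_card_eq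
    (Finset.subset_univ s₀) hs₀k (by simpa using hn)
  refine ⟨s, hscard, ?_⟩
  intro C
  have hXS : X i ⊆ ⋃ v ∈ s, disk G v ρ := by
    intro x hx
    have hx' := hs₀sub hx
    simp only [Set.mem_iUnion] at hx' ⊢
    obtain ⟨v, hv, hxv⟩ := hx'
    exact ⟨v, hs₀s hv, hxv⟩
  have hcompl : (⋃ v ∈ s, disk G v ρ)ᶜ ⊆ (X i)ᶜ := Set.compl_subset_compl.mpr hXS
  obtain ⟨x₀, hx₀⟩ := C.exists_rep
  set D := (G.induce (X i)ᶜ).connectedComponentMk ⟨(x₀ : V), hcompl x₀.2⟩ with hD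
  have hmap : ∀ y : ↥C.supp,
      (G.induce (X i)ᶜ).connectedComponentMk ⟨((y : ↥(⋃ v ∈ s, disk G v ρ)ᶜ) : V),
        hcompl (y : ↥(⋃ v ∈ s, disk G v ρ)ᶜ).2⟩ = D := by
    rintro ⟨y, hy⟩
    have hyC : (G.induce (⋃ v ∈ s, disk G v ρ)ᶜ).connectedComponentMk y = C :=
      (ConnectedComponent.mem_supp_iff _ _).mp hy
    have hr : (G.induce (⋃ v ∈ s, disk G v ρ)ᶜ).Reachable y x₀ :=
      ConnectedComponent.exact (hyC.trans hx₀.symm)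
    obtain ⟨W⟩ := hr
    have hr' := aux_walk_transfer W (fun z _ => hcompl z.2)
      ⟨(y : V), hcompl y.2⟩ ⟨(x₀ : V), hcompl x₀.2⟩ rfl rfl
    exact ConnectedComponent.sound hr'
  have hcardC : Nat.card C.supp = (Subtype.val '' C.supp).ncard := by
    rw [Set.ncard_image_of_injective _ Subtype.val_injective, ← Nat.card_coe_set_eq]
  have hcardD : Nat.card D.supp = (Subtype.val '' D.supp).ncard := by
    rw [Set.ncard_image_of_injective _ Subtype.val_injective, ← Nat.card_coe_set_eq]
  have hAB : Subtype.val '' C.supp ⊆ Subtype.val '' D.supp := by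
    rintro y ⟨x, hx, rfl⟩
    exact ⟨⟨(x : V), hcompl x.2⟩,
      (ConnectedComponent.mem_supp_iff _ _).mpr (hmap ⟨x, hx⟩), rfl⟩
  have hmono := Set.ncard_le_ncard hAB (Set.toFinite _)
  have := hbal D
  omega
end

section
/- Let H be a finite connected unweighted graph and let ({X_i | i ∈ I}, T=(I,F)) be a tree-decomposition of H of width k−1. For every integer r ≥ 0, define X_i^(r) = D_r(X_i,H) = ∪_{x∈X_i} D_r(x,H). Then ({X_i^(r) | i ∈ I}, T=(I,F)) is a tree-decomposition of H of k-breadth at most r; in particular, for all i,j,l ∈ I, if j lies on the path from i to l in T then X_i^(r) ∩ X_l^(r) ⊆ X_j^(r). -/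
open SimpleGraph

lemma walk_avoid {V I : Type} {H : SimpleGraph V} {T : SimpleGraph I} {X : I → Set V}
    (hTD : IsTreeDecomp H T X) {x : V} {j a c : I}
    (hx : x ∉ X j) (ha : x ∈ X a) (hc : x ∈ X c) :
    ∃ q : T.Walk a c, j ∉ q.support := by
  classical
  obtain ⟨w⟩ := hTD.1.isConnected a c
  refine ⟨w.toPath, fun hj => hx ?_⟩
  exact hTD.2.2.2 a j c w.toPath w.toPath.2 hj ⟨ha, hc⟩

lemma walk_hits_aux {V I : Type} {H : SimpleGraph V} {T : SimpleGraph I} {X : I → Set V}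
    (hTD : IsTreeDecomp H T X) {j : I} {x z : V} (w : H.Walk x z) :
    (∀ y ∈ w.support, y ∉ X j) →
    ∀ a b, x ∈ X a → z ∈ X b → ∃ q : T.Walk a b, j ∉ q.support := by
  classical
  induction w with
  | nil =>
    intro h a b ha hb
    exact walk_avoid hTD (h _ (by simp)) ha hb
  | @cons u v z hadj w ih =>
    intro h a b ha hb
    obtain ⟨c, hx, hu⟩ := hTD.2.2.1 _ _ hadj
    have h' : ∀ y ∈ w.support, y ∉ X j := fun y hy => h y (by simp [hy])
    obtain ⟨q2, hq2⟩ := ih h' c b hu hb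
    obtain ⟨q1, hq1⟩ := walk_avoid hTD (h _ (by simp)) ha hx
    refine ⟨q1.append q2, fun hj => ?_⟩
    rcases (Walk.mem_support_append_iff _ _).1 hj with h1 | h2
    · exact hq1 h1
    · exact hq2 h2

lemma separator {V I : Type} {H : SimpleGraph V} {T : SimpleGraph I} {X : I → Set V}
    (hTD : IsTreeDecomp H T X) {i j l : I} (p : T.Walk i l) (hp : p.IsPath)
    (hj : j ∈ p.support) {x z : V} (hx : x ∈ X i) (hz : z ∈ X l) (w : H.Walk x z) :
    ∃ y ∈ w.support, y ∈ X j := by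
  classical
  by_contra hcon
  push_neg at hcon
  obtain ⟨q, hq⟩ := walk_hits_aux hTD w hcon i l hx hz
  have huniq := hTD.1.IsAcyclic.path_unique ⟨p, hp⟩ q.toPath
  have : j ∈ (q.toPath : T.Walk i l).support := by
    rw [← huniq]; exact hj
  exact hq (Walk.support_toPath_subset q this)

/-- Blowing up each bag of a width-`(k−1)` tree-decomposition of `H` to its
`r`-neighborhood yields a tree-decomposition of `H` of `k`-breadth at most `r`
(in particular, the separation property holds for the blown-up bags). -/
theorem stmt15 {V I : Type} [Fintype V] (H : SimpleGraph V) (hH : H.Connected)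
    (T : SimpleGraph I) (X : I → Set V) (k : ℕ) (hk : 1 ≤ k)
    (hTD : IsTreeDecomp H T X) (hw : ∀ i, (X i).ncard ≤ k) (r : ℕ) :
    IsTreeDecomp H T (fun i => ⋃ x ∈ X i, disk H x r) ∧
    ∀ i, ∃ s : Finset V, s.card ≤ k ∧ (⋃ x ∈ X i, disk H x r) ⊆ ⋃ v ∈ s, disk H v r := by
  classical
  constructor
  · refine ⟨hTD.1, ?_, ?_, ?_⟩
    · intro v
      obtain ⟨i, hi⟩ := hTD.2.1 v
      exact ⟨i, Set.mem_biUnion hi (by simp [disk, SimpleGraph.dist_self])⟩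
    · intro u v huv
      obtain ⟨i, hu, hv⟩ := hTD.2.2.1 u v huv
      exact ⟨i, Set.mem_biUnion hu (by simp [disk, SimpleGraph.dist_self]), Set.mem_biUnion hv (by simp [disk, SimpleGraph.dist_self])⟩
    · intro i j l p hp hj v hv
      simp only [Set.mem_inter_iff, Set.mem_iUnion] at hv
      obtain ⟨⟨x, hxi, hvx⟩, ⟨z, hzl, hvz⟩⟩ := hv
      simp only [disk, Set.mem_setOf_eq] at hvx hvz
      obtain ⟨P, hP⟩ := ((hH v x).exists_walk_length_eq_dist)
      obtain ⟨Q, hQ⟩ := ((hH v z).exists_walk_length_eq_dist)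
      have hnear : ∀ y ∈ (P.reverse.append Q).support, H.dist v y ≤ r := by
        intro y hy
        rw [Walk.mem_support_append_iff] at hy
        rcases hy with hy | hy
        · rw [Walk.support_reverse, List.mem_reverse] at hy
          calc H.dist v y ≤ (P.takeUntil y hy).length := SimpleGraph.dist_le _
            _ ≤ P.length := Walk.length_takeUntil_le P hy
            _ ≤ r := by omega
        · calc H.dist v y ≤ (Q.takeUntil y hy).length := SimpleGraph.dist_le _
            _ ≤ Q.length := Walk.length_takeUntil_le Q hy
            _ ≤ r := by omega
      obtain ⟨y, hy, hyj⟩ := separator hTD p hp hj hxi hzl (P.reverse.append Q)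
      refine Set.mem_biUnion hyj ?_
      simp only [disk, Set.mem_setOf_eq]
      exact hnear y hy
  · intro i
    refine ⟨(Set.toFinite (X i)).toFinset, ?_, ?_⟩
    · rw [← Set.ncard_eq_toFinset_card]; exact hw i
    · intro v hv
      simp only [Set.mem_iUnion] at hv ⊢
      obtain ⟨x, hx, hd⟩ := hv
      exact ⟨x, (Set.Finite.mem_toFinset _).2 hx, hd⟩
end

section
/- If a finite connected unweighted graph G admits a multiplicative t-spanner H with tree-width tw(H) ≤ k−1, then tb_k(G) ≤ ⌈t/2⌉. -/
open SimpleGraph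

private lemma sepLemma {V I : Type} {H : SimpleGraph V} {T : SimpleGraph I} {X : I → Set V}
    (hT : T.IsTree)
    (hedge : ∀ u v : V, H.Adj u v → ∃ i, u ∈ X i ∧ v ∈ X i)
    (hsep : ∀ i j k : I, ∀ p : T.Walk i k, p.IsPath → j ∈ p.support → X i ∩ X k ⊆ X j)
    {v w : V} (W : H.Walk v w) :
    ∀ {i k j : I} (p : T.Walk i k), p.IsPath → j ∈ p.support → v ∈ X i → w ∈ X k →
      ∃ z ∈ W.support, z ∈ X j := by
  classical
  induction W with
  | nil =>
    intro i k j p hp hj hv hw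
    exact ⟨_, Walk.start_mem_support _, hsep i j k p hp hj ⟨hv, hw⟩⟩
  | @cons a b c hab W ih =>
    intro i k j p hp hj hv hw
    obtain ⟨i', hai', hbi'⟩ := hedge a b hab
    obtain ⟨q1⟩ := hT.isConnected i i'
    obtain ⟨q2⟩ := hT.isConnected i' k
    have hbp : (q1.bypass.append q2.bypass).bypass.IsPath := Walk.bypass_isPath _
    have huniq : (q1.bypass.append q2.bypass).bypass = p := by
      have := hT.IsAcyclic.path_unique ⟨(q1.bypass.append q2.bypass).bypass, hbp⟩ ⟨p, hp⟩
      exact congrArg Subtype.val this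
    have hj' : j ∈ q1.bypass.support ∨ j ∈ q2.bypass.support := by
      have : j ∈ (q1.bypass.append q2.bypass).support :=
        Walk.support_bypass_subset _ (huniq ▸ hj)
      exact (Walk.mem_support_append_iff _ _).1 this
    rcases hj' with h1 | h2
    · exact ⟨a, Walk.start_mem_support _,
        hsep i j i' q1.bypass (Walk.bypass_isPath _) h1 ⟨hv, hai'⟩⟩
    · obtain ⟨z, hz, hzX⟩ := ih q2.bypass (Walk.bypass_isPath _) h2 hbi' hw
      exact ⟨z, by simp [Walk.support_cons, hz], hzX⟩

private lemma dist_getVert {V : Type} {H : SimpleGraph V} (hc : H.Connected)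
    {u v : V} (W : H.Walk u v) :
    ∀ n, H.dist u (W.getVert n) ≤ n ∧ H.dist (W.getVert n) v ≤ W.length - n := by
  induction W with
  | nil =>
    intro n
    rw [Walk.getVert_of_length_le _ (by simp : (Walk.nil : H.Walk _ _).length ≤ n)]
    simp [SimpleGraph.dist_self]
  | @cons a b c hab W ih =>
    intro n
    cases n with
    | zero =>
      refine ⟨by simp, ?_⟩
      simpa using SimpleGraph.dist_le (Walk.cons hab W)
    | succ n =>
      rw [Walk.getVert_cons_succ]
      constructor
      · calc H.dist a (W.getVert n) ≤ H.dist a b + H.dist b (W.getVert n) :=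
              hc.dist_triangle
          _ ≤ 1 + n := add_le_add
              (by simpa using SimpleGraph.dist_le (Walk.cons hab Walk.nil)) (ih n).1
          _ = n + 1 := by omega
      · have := (ih n).2
        simpa [Walk.length_cons, Nat.succ_sub_succ] using this

/-- If a connected graph `G` admits a multiplicative `t`-spanner `H` with
tree-width at most `k−1`, then `tb_k(G) ≤ ⌈t/2⌉`. -/
theorem stmt16 {V : Type} [Fintype V] (G : SimpleGraph V) (hG : G.Connected)
    (t k : ℕ) (ht : 1 ≤ t) (hk : 1 ≤ k)
    (h : ∃ H : SimpleGraph V, H ≤ G ∧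
      (∀ u v : V, H.edist u v ≤ (t : ℕ∞) * G.edist u v) ∧ treeWidth H ≤ k - 1) :
    kTreeBreadth k G ≤ (t + 1) / 2 := by
  classical
  obtain ⟨H, hle, hsp, htw⟩ := h
  set r := (t + 1) / 2 with hr
  -- H is connected
  have hHconn : H.Connected := by
    haveI := hG.nonempty
    refine Connected.mk fun u v => ?_
    apply reachable_of_edist_ne_top
    intro htop
    have h1 : G.edist u v ≠ ⊤ := edist_ne_top_iff_reachable.2 (hG.preconnected u v)
    have h2 : (t : ℕ∞) * G.edist u v ≠ ⊤ := WithTop.mul_ne_top (ENat.coe_ne_top t) h1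
    have := hsp u v
    rw [htop] at this
    exact h2 (top_le_iff.mp this)
  -- spanner property on adjacent pairs
  have hspan : ∀ u v : V, G.Adj u v → H.dist u v ≤ t := by
    intro u v huv
    have h1 : G.edist u v = 1 := edist_eq_one_iff_adj.2 huv
    have h2 : H.edist u v ≤ (t : ℕ∞) := by simpa [h1] using hsp u v
    exact ENat.toNat_le_of_le_coe h2
  -- a tree decomposition of H with bags of size ≤ k
  have hne : ({ w : ℕ | ∃ (I : Type) (T : SimpleGraph I) (X : I → Set V),
      IsTreeDecomp H T X ∧ ∀ i, (X i).ncard ≤ w + 1 } : Set ℕ).Nonempty := by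
    refine ⟨Fintype.card V, Unit, ⊥, fun _ => Set.univ, ⟨?_, ?_, ?_, ?_⟩, ?_⟩
    · exact ⟨Connected.mk fun a b => by cases a; cases b; exact Reachable.refl _, isAcyclic_bot⟩
    · exact fun v => ⟨(), Set.mem_univ v⟩
    · exact fun u v _ => ⟨(), Set.mem_univ u, Set.mem_univ v⟩
    · exact fun i j k p hp hj x _ => Set.mem_univ x
    · intro i
      show (Set.univ : Set V).ncard ≤ Fintype.card V + 1
      have : (Set.univ : Set V).ncard = Fintype.card V := by
        rw [Set.ncard_univ, Nat.card_eq_fintype_card]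
      omega
  obtain ⟨I, T, X, hd, hbag⟩ := Nat.sInf_mem hne
  have hbagk : ∀ i, (X i).ncard ≤ k := by
    intro i
    have h1 := hbag i
    have h2 : sInf { w : ℕ | ∃ (I' : Type) (T' : SimpleGraph I') (X' : I' → Set V),
        IsTreeDecomp H T' X' ∧ ∀ i', (X' i').ncard ≤ w + 1 } ≤ k - 1 := htw
    have h3 := Nat.add_le_add_right h2 1
    have h4 := h1.trans h3
    clear h1 h2 h3 hbag
    omega
  -- the expanded bags
  set X' : I → Set V := fun i => {u | ∃ x ∈ X i, H.dist u x ≤ r} with hX'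
  apply Nat.sInf_le
  refine ⟨I, T, X', ⟨hd.1, ?_, ?_, ?_⟩, ?_⟩
  · -- every vertex in a bag
    intro v
    obtain ⟨i, hi⟩ := hd.2.1 v
    refine ⟨i, ?_⟩
    show ∃ x ∈ X i, H.dist v x ≤ r
    exact ⟨v, hi, by simp [SimpleGraph.dist_self]⟩
  · -- every edge of G in a bag
    intro u v huv
    have hduv : H.dist u v ≤ t := hspan u v huv
    obtain ⟨W, hW⟩ := hHconn.exists_walk_length_eq_dist u v
    set m := W.getVert (H.dist u v / 2) with hm
    have h1 := (dist_getVert hHconn W (H.dist u v / 2)).1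
    have h2 := (dist_getVert hHconn W (H.dist u v / 2)).2
    rw [hW] at h2
    obtain ⟨i, hi⟩ := hd.2.1 m
    refine ⟨i, ⟨m, hi, h1.trans (by omega)⟩, ⟨m, hi, ?_⟩⟩
    rw [SimpleGraph.dist_comm]
    exact h2.trans (by omega)
  · -- the interpolation property
    intro i j k' p hp hj
    rintro u ⟨⟨x, hx, hxd⟩, ⟨y, hy, hyd⟩⟩
    obtain ⟨W1, hW1⟩ := hHconn.exists_walk_length_eq_dist x u
    obtain ⟨W2, hW2⟩ := hHconn.exists_walk_length_eq_dist u y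
    obtain ⟨z, hz, hzX⟩ :=
      sepLemma hd.1 hd.2.2.1 hd.2.2.2 (W1.append W2) p hp hj hx hy
    refine ⟨z, hzX, ?_⟩
    rcases (Walk.mem_support_append_iff _ _).1 hz with h1 | h2
    · have d1 : H.dist z u ≤ (W1.dropUntil z h1).length := SimpleGraph.dist_le _
      have d2 : (W1.dropUntil z h1).length ≤ W1.length := Walk.length_dropUntil_le W1 h1
      have d3 : H.dist x u = H.dist u x := SimpleGraph.dist_comm ..
      rw [SimpleGraph.dist_comm]
      omega
    · have d1 : H.dist u z ≤ (W2.takeUntil z h2).length := SimpleGraph.dist_le _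
      have d2 : (W2.takeUntil z h2).length ≤ W2.length := Walk.length_takeUntil_le W2 h2
      omega
  · -- covering by ≤ k disks
    intro i
    have hfin : (X i).Finite := Set.toFinite _
    refine ⟨hfin.toFinset, ?_, ?_⟩
    · rw [← Set.ncard_eq_toFinset_card (X i) hfin]
      exact hbagk i
    · rintro u ⟨x, hx, hxd⟩
      refine Set.mem_biUnion (hfin.mem_toFinset.2 hx) ?_
      have : G.dist u x ≤ H.dist u x := Reachable.dist_anti hle (hHconn.preconnected u x)
      exact le_trans this hxd
end
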